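/- arXiv:1701.02097 — 3 statements merged into one kernel-verified Lean document; each statement's English description precedes it below -/
import Mathlib

section
/- Let M ∈ ℕ and let v_k : Ω → ℂ² (0 ≤ k ≤ M) be of class C² and p_k : Ω → ℂ (0 ≤ k ≤ M) of class C¹, with v₀ and p₀ real-valued, and set v_k = 0, p_k = 0 for k > M. Define v(t,x) = v₀(x) + (1/2)Σ_{k=1}^{M}(v_k(x)e^{−ikωt} + conj(v_k(x))e^{ikωt}) and p(t,x) analogously, and let f : Ω → ℂ². Then (v,p) satisfies ∂ₜv + (v·∇)v + ∇p − νΔv = Re(f(x)e^{−iωt}) and ∂ₜp + c² div v + div(p v) = 0 at every (t,x) ∈ ℝ×Ω if and only if for every k ≥ 0 and every x ∈ Ω one has 𝓛_k(V,P)(x) + 𝓝_k(V,P)(x) = (f(x), 0) δ_{k=1}. -/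
noncomputable section

/-- Points of the plane. -/
abbrev Pt : Type := Fin 2 → ℝ

/-- Partial derivative `∂ᵢ g` of a complex-valued function on the plane. -/
def pd (i : Fin 2) (g : Pt → ℂ) (x : Pt) : ℂ := fderiv ℝ g x (Pi.single i 1)

/-- Divergence (complex). -/
def vdiv (v : Pt → Fin 2 → ℂ) (x : Pt) : ℂ := ∑ i, pd i (fun y => v y i) x

/-- Laplacian (complex). -/
def lap (g : Pt → ℂ) (x : Pt) : ℂ := ∑ i, pd i (fun y => pd i g y) x

/-- Advection term `(u·∇)w` (j-th component). -/
def adv (u w : Pt → Fin 2 → ℂ) (x : Pt) (j : Fin 2) : ℂ :=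
  ∑ i, u x i * pd i (fun y => w y j) x

/-- Componentwise complex conjugate of a vector field. -/
def cV (v : Pt → Fin 2 → ℂ) : Pt → Fin 2 → ℂ := fun y i => star (v y i)

/-- Momentum component of the linear operator `𝓛_k(V,P)`. -/
def Lmom (ω ν : ℝ) (k : ℕ) (V : ℕ → Pt → Fin 2 → ℂ) (P : ℕ → Pt → ℂ)
    (x : Pt) (j : Fin 2) : ℂ :=
  -Complex.I * k * ω * V k x j - ν * lap (fun y => V k y j) x + pd j (P k) x

/-- Continuity component of the linear operator `𝓛_k(V,P)`. -/
def Lcont (ω c : ℝ) (k : ℕ) (V : ℕ → Pt → Fin 2 → ℂ) (P : ℕ → Pt → ℂ) (x : Pt) : ℂ :=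
  -Complex.I * k * ω * P k x + c ^ 2 * vdiv (V k) x

/-- Momentum component of the nonlinear operator `𝓝_k(V,P)`. -/
def Nmom (k : ℕ) (V : ℕ → Pt → Fin 2 → ℂ) (x : Pt) (j : Fin 2) : ℂ :=
  if k = 0 then
    (1 / 2) * adv (V 0) (V 0) x j
      + (1 / 4) * ∑' m : ℕ, (adv (V m) (cV (V m)) x j + adv (cV (V m)) (V m) x j)
  else
    (1 / 2) * ∑ m ∈ Finset.range (k + 1), adv (V m) (V (k - m)) x j
      + (1 / 2) * ∑' m : ℕ,
          (adv (V (m + k)) (cV (V m)) x j + adv (cV (V m)) (V (m + k)) x j)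

/-- Continuity component of the nonlinear operator `𝓝_k(V,P)`. -/
def Ncont (k : ℕ) (V : ℕ → Pt → Fin 2 → ℂ) (P : ℕ → Pt → ℂ) (x : Pt) : ℂ :=
  if k = 0 then
    (1 / 2) * vdiv (fun y i => P 0 y * V 0 y i) x
      + (1 / 4) * ∑' m : ℕ,
          vdiv (fun y i => V m y i * star (P m y) + star (V m y i) * P m y) x
  else
    (1 / 2) * ∑ m ∈ Finset.range (k + 1), vdiv (fun y i => P (k - m) y * V m y i) x
      + (1 / 2) * ∑' m : ℕ,
          vdiv (fun y i => V (m + k) y i * star (P m y) + star (V m y i) * P (m + k) y) x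


open Complex Finset

/-! ### pd basics -/

lemma pd_congr_nhds {g₁ g₂ : Pt → ℂ} {x : Pt} (h : g₁ =ᶠ[nhds x] g₂) (i : Fin 2) :
    pd i g₁ x = pd i g₂ x := by
  unfold pd; rw [h.fderiv_eq]

lemma pd_congr_of_isOpen {g₁ g₂ : Pt → ℂ} {s : Set Pt} (hs : IsOpen s) {x : Pt} (hx : x ∈ s)
    (h : ∀ y ∈ s, g₁ y = g₂ y) (i : Fin 2) : pd i g₁ x = pd i g₂ x :=
  pd_congr_nhds (Filter.eventuallyEq_of_mem (hs.mem_nhds hx) h) i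

lemma pd_const (i : Fin 2) (c : ℂ) (x : Pt) : pd i (fun _ => c) x = 0 := by
  unfold pd; rw [fderiv_fun_const]; simp

lemma pd_zero (i : Fin 2) (x : Pt) : pd i (fun _ => (0:ℂ)) x = 0 := pd_const i 0 x

lemma pd_add {g h : Pt → ℂ} {x : Pt} (hg : DifferentiableAt ℝ g x)
    (hh : DifferentiableAt ℝ h x) (i : Fin 2) :
    pd i (fun y => g y + h y) x = pd i g x + pd i h x := by
  unfold pd; rw [fderiv_fun_add hg hh]; simp

lemma pd_sum {ι : Type*} (s : Finset ι) (g : ι → Pt → ℂ) {x : Pt}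
    (hg : ∀ k ∈ s, DifferentiableAt ℝ (g k) x) (i : Fin 2) :
    pd i (fun y => ∑ k ∈ s, g k y) x = ∑ k ∈ s, pd i (g k) x := by
  unfold pd
  rw [fderiv_fun_sum hg]
  simp [ContinuousLinearMap.sum_apply]

lemma pd_star (g : Pt → ℂ) (x : Pt) (i : Fin 2) :
    pd i (fun y => star (g y)) x = star (pd i g x) := by
  unfold pd
  have : (fun y => star (g y)) = (⇑Complex.conjCLE) ∘ g := rfl
  rw [this, ContinuousLinearEquiv.comp_fderiv]
  rfl

lemma pd_mul_const (g : Pt → ℂ) (c : ℂ) (x : Pt) (i : Fin 2) :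
    pd i (fun y => g y * c) x = pd i g x * c := by
  rcases eq_or_ne c 0 with rfl | hc
  · simpa using pd_const i 0 x
  · by_cases hg : DifferentiableAt ℝ g x
    · unfold pd; rw [fderiv_mul_const hg]; simp [mul_comm]
    · have hg' : ¬ DifferentiableAt ℝ (fun y => g y * c) x := by
        intro h
        have := h.mul_const c⁻¹
        simp only [mul_assoc, mul_inv_cancel₀ hc, mul_one] at this
        exact hg this
      unfold pd
      rw [fderiv_zero_of_not_differentiableAt hg, fderiv_zero_of_not_differentiableAt hg']
      simp

lemma pd_const_mul (g : Pt → ℂ) (c : ℂ) (x : Pt) (i : Fin 2) :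
    pd i (fun y => c * g y) x = c * pd i g x := by
  simp only [mul_comm c]; exact pd_mul_const g c x i

lemma pd_smul2 (g : Pt → ℂ) (c : ℂ) (x : Pt) (i : Fin 2) :
    pd i (fun y => (1/2 : ℂ) * g y) x = (1/2 : ℂ) * pd i g x := pd_const_mul g _ x i

lemma pd_mul {g h : Pt → ℂ} {x : Pt} (hg : DifferentiableAt ℝ g x)
    (hh : DifferentiableAt ℝ h x) (i : Fin 2) :
    pd i (fun y => g y * h y) x = pd i g x * h x + g x * pd i h x := by
  unfold pd; rw [fderiv_fun_mul hg hh]; simp [mul_comm]; ring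

/-! ### differentiability helpers -/

lemma diffAt_star {g : Pt → ℂ} {x : Pt} (hg : DifferentiableAt ℝ g x) :
    DifferentiableAt ℝ (fun y => star (g y)) x :=
  Complex.conjCLE.differentiable.differentiableAt.comp x hg

lemma contDiffOn_star {g : Pt → ℂ} {s : Set Pt} {n : ℕ∞} (hg : ContDiffOn ℝ n g s) :
    ContDiffOn ℝ n (fun y => star (g y)) s :=
  Complex.conjCLE.contDiff.comp_contDiffOn hg

/-- if `g` is C¹ on an open set, `pd i g` agrees there and `pd` pointwise works;
    if `g` is C² on open `s`, then `pd i g` is differentiable at points of `s`. -/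
lemma diffAt_pd {g : Pt → ℂ} {s : Set Pt} (hs : IsOpen s) (hg : ContDiffOn ℝ 2 g s)
    {x : Pt} (hx : x ∈ s) (i : Fin 2) : DifferentiableAt ℝ (fun y => pd i g y) x := by
  have h1 : ContDiffOn ℝ 1 (fderiv ℝ g) s :=
    hg.fderiv_of_isOpen hs (by norm_num)
  have h2 : DifferentiableOn ℝ (fderiv ℝ g) s := h1.differentiableOn (by norm_num)
  have h3 : DifferentiableAt ℝ (fderiv ℝ g) x := h2.differentiableAt (hs.mem_nhds hx)
  exact (ContinuousLinearMap.apply ℝ ℂ (Pi.single i (1:ℝ))).differentiableAt.comp x h3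


/-- The harmonic `e^{-i k ω t}`. -/
def Efn (ω : ℝ) (k : ℤ) (t : ℝ) : ℂ := Complex.exp (-(Complex.I * k * ω * t))

lemma Efn_add (ω : ℝ) (k l : ℤ) (t : ℝ) : Efn ω (k + l) t = Efn ω k t * Efn ω l t := by
  unfold Efn
  rw [← Complex.exp_add]
  congr 1
  push_cast
  ring

lemma Efn_zero (ω : ℝ) (t : ℝ) : Efn ω 0 t = 1 := by
  unfold Efn; norm_num

lemma Efn_star (ω : ℝ) (k : ℤ) (t : ℝ) : star (Efn ω k t) = Efn ω (-k) t := by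
  unfold Efn
  have h : (starRingEnd ℂ) (cexp (-(Complex.I * (k:ℂ) * ω * t)))
      = cexp ((starRingEnd ℂ) (-(Complex.I * (k:ℂ) * ω * t))) := (Complex.exp_conj _).symm
  show (starRingEnd ℂ) (cexp (-(Complex.I * (k:ℂ) * ω * t))) = _
  rw [h]
  congr 1
  simp only [map_neg, map_mul, Complex.conj_I, Complex.conj_ofReal, map_intCast]
  push_cast
  ring

lemma Efn_zpow (ω : ℝ) (k : ℤ) (t : ℝ) :
    Efn ω k t = Complex.exp (-(Complex.I * ω * t)) ^ k := by
  rw [← Complex.exp_int_mul]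
  unfold Efn
  congr 1
  ring

lemma hasDerivAt_Efn (ω : ℝ) (k : ℤ) (t : ℝ) :
    HasDerivAt (fun s : ℝ => Efn ω k s) (-(Complex.I * k * ω) * Efn ω k t) t := by
  have h1 : HasDerivAt (fun s : ℝ => ((s : ℂ))) 1 t := by
    simpa using (hasDerivAt_id t).ofReal_comp
  have h2 : HasDerivAt (fun s : ℝ => -(Complex.I * k * ω) * (s : ℂ))
      (-(Complex.I * k * ω)) t := by
    simpa using h1.const_mul (-(Complex.I * (k:ℂ) * ω))
  have h3 := h2.cexp
  have heq : (fun s : ℝ => Complex.exp (-(Complex.I * k * ω) * (s : ℂ)))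
      = fun s : ℝ => Efn ω k s := by
    funext s; unfold Efn; ring_nf
  rw [heq] at h3
  convert h3 using 1
  unfold Efn
  ring_nf

/-- Linear independence of the harmonics `e^{-ikωt}`, `k ∈ [-N, N]`. -/
lemma trig_coeffs_zero {ω : ℝ} (hω : ω ≠ 0) (N : ℕ) (c : ℤ → ℂ)
    (h : ∀ t : ℝ, ∑ k ∈ Finset.Icc (-(N:ℤ)) (N:ℤ), c k * Efn ω k t = 0) :
    ∀ k ∈ Finset.Icc (-(N:ℤ)) (N:ℤ), c k = 0 := by
  set p : Polynomial ℂ :=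
    ∑ k ∈ Finset.Icc (-(N:ℤ)) (N:ℤ), Polynomial.C (c k) * Polynomial.X ^ (k + N).toNat with hp
  have hroot : ∀ t : ℝ, p.eval (Complex.exp (-(Complex.I * ω * t))) = 0 := by
    intro t
    set z := Complex.exp (-(Complex.I * ω * t)) with hz
    have hz0 : z ≠ 0 := Complex.exp_ne_zero _
    have : p.eval z = (∑ k ∈ Finset.Icc (-(N:ℤ)) (N:ℤ), c k * Efn ω k t) * z ^ N := by
      rw [hp, Polynomial.eval_finset_sum, Finset.sum_mul]
      refine Finset.sum_congr rfl fun k hk => ?_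
      simp only [Finset.mem_Icc] at hk
      have hk0 : (0:ℤ) ≤ k + N := by omega
      rw [Polynomial.eval_mul, Polynomial.eval_C, Polynomial.eval_pow, Polynomial.eval_X]
      rw [Efn_zpow ω k t, ← hz]
      rw [mul_assoc]
      congr 1
      rw [← zpow_natCast z ((k + N).toNat), Int.toNat_of_nonneg hk0, zpow_add₀ hz0,
        zpow_natCast]
    rw [this, h t, zero_mul]
  have hpz : p = 0 := by
    apply Polynomial.eq_zero_of_infinite_isRoot
    refine Set.infinite_of_injective_forall_mem
      (f := fun n : ℕ => Complex.exp (Complex.I * (Real.pi / (n + 2) : ℝ))) ?_ ?_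
    · intro m n hmn
      simp only at hmn
      have hexp : Complex.exp (Complex.I * (Real.pi / (m + 2) : ℝ) -
          Complex.I * (Real.pi / (n + 2) : ℝ)) = 1 := by
        rw [Complex.exp_sub, hmn, div_self (Complex.exp_ne_zero _)]
      rw [Complex.exp_eq_one_iff] at hexp
      obtain ⟨z, hzeq⟩ := hexp
      have hzr : (Real.pi / (m + 2) - Real.pi / (n + 2) : ℝ) = z * (2 * Real.pi) := by
        rw [show Complex.I * (Real.pi / (m + 2) : ℝ) - Complex.I * (Real.pi / (n + 2) : ℝ)
            = ((Real.pi / (m + 2) - Real.pi / (n + 2) : ℝ) : ℂ) * Complex.I by push_cast; ring,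
          show (z : ℂ) * (2 * Real.pi * Complex.I) = ((z * (2 * Real.pi) : ℝ) : ℂ) * Complex.I
            by push_cast; ring] at hzeq
        exact_mod_cast mul_right_cancel₀ Complex.I_ne_zero hzeq
      have hpi := Real.pi_pos
      have hm2 : (0:ℝ) < m + 2 := by positivity
      have hn2 : (0:ℝ) < n + 2 := by positivity
      have hma : Real.pi / (m + 2) ≤ Real.pi / 2 :=
        div_le_div_of_nonneg_left hpi.le (by norm_num) (by norm_num)
      have hna : Real.pi / (n + 2) ≤ Real.pi / 2 :=
        div_le_div_of_nonneg_left hpi.le (by norm_num) (by norm_num)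
      have hmp : 0 < Real.pi / (m + 2) := by positivity
      have hnp : 0 < Real.pi / (n + 2) := by positivity
      have hz0 : z = 0 := by
        by_contra hzz
        have h1 : (1:ℝ) ≤ |(z:ℝ)| := by
          exact_mod_cast Int.one_le_abs (by exact_mod_cast hzz)
        have h2 : |(Real.pi / (m + 2) - Real.pi / (n + 2) : ℝ)| < 2 * Real.pi := by
          rw [abs_lt]; constructor <;> nlinarith
        rw [hzr, abs_mul, abs_of_pos (by positivity : (0:ℝ) < 2 * Real.pi)] at h2
        nlinarith
      rw [hz0] at hzr
      simp only [Int.cast_zero, zero_mul] at hzr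
      have h3 : Real.pi / (m + 2) = Real.pi / (n + 2) := by linarith
      have h4 := (div_eq_div_iff hm2.ne' hn2.ne').mp h3
      have h5 : (m:ℝ) = n := by nlinarith
      exact_mod_cast h5
    · intro n
      show p.IsRoot (cexp (Complex.I * ((Real.pi / ((n:ℝ) + 2) : ℝ) : ℂ)))
      have hωc : (ω:ℂ) ≠ 0 := Complex.ofReal_ne_zero.mpr hω
      have harg : Complex.I * ((Real.pi / ((n:ℝ) + 2) : ℝ) : ℂ)
          = -(Complex.I * (ω:ℂ) * ((-(Real.pi / ((n:ℝ) + 2)) / ω : ℝ) : ℂ)) := by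
        push_cast
        field_simp
      rw [Polynomial.IsRoot, harg]
      exact hroot _
  intro k hk
  have hco := congrArg (fun q => Polynomial.coeff q ((k + N).toNat)) hpz
  simp only [hp, Polynomial.finset_sum_coeff, Polynomial.coeff_C_mul, Polynomial.coeff_X_pow,
    Polynomial.coeff_zero, mul_ite, mul_one, mul_zero] at hco
  have hkb := Finset.mem_Icc.mp hk
  rw [Finset.sum_eq_single k
      (fun b hb hne => by
        simp only [Finset.mem_Icc] at hb
        rw [if_neg (fun hcon => hne (by omega))])
      (fun hks => absurd hk hks), if_pos rfl] at hco
  exact hco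

/-- symmetric sum splitting -/
lemma sum_Icc_symm (M : ℕ) (f : ℤ → ℂ) :
    ∑ k ∈ Finset.Icc (-(M:ℤ)) (M:ℤ), f k
      = f 0 + ∑ k ∈ Finset.range M, (f (k+1) + f (-(k+1:ℤ))) := by
  induction M with
  | zero => simp
  | succ m ih =>
    have hset : Finset.Icc (-(m+1:ℤ)) (m+1:ℤ)
        = insert (-(m+1:ℤ)) (insert ((m+1:ℤ)) (Finset.Icc (-(m:ℤ)) (m:ℤ))) := by
      ext k
      simp only [Finset.mem_Icc, Finset.mem_insert]
      omega
    have h1 : (-(m+1:ℤ)) ∉ insert ((m+1:ℤ)) (Finset.Icc (-(m:ℤ)) (m:ℤ)) := by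
      simp only [Finset.mem_insert, Finset.mem_Icc]
      omega
    have h2 : ((m+1:ℤ)) ∉ Finset.Icc (-(m:ℤ)) (m:ℤ)  := by
      simp only [Finset.mem_Icc]; omega
    rw [show ((m+1:ℕ):ℤ) = (m:ℤ)+1 by push_cast; ring] at *
    rw [hset, Finset.sum_insert h1, Finset.sum_insert h2, ih, Finset.sum_range_succ]
    push_cast
    ring

/-- padding of a symmetric sum -/
lemma sum_Icc_pad (B B' : ℕ) (hBB : B ≤ B') (f : ℤ → ℂ)
    (hf : ∀ k : ℤ, (B:ℤ) < |k| → f k = 0) :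
    ∑ k ∈ Finset.Icc (-(B:ℤ)) (B:ℤ), f k = ∑ k ∈ Finset.Icc (-(B':ℤ)) (B':ℤ), f k := by
  apply Finset.sum_subset
  · apply Finset.Icc_subset_Icc <;> omega
  · intro k hk hnk
    simp only [Finset.mem_Icc] at hk hnk
    refine hf k ?_
    rcases abs_cases k with ⟨h1, h2⟩ | ⟨h1, h2⟩ <;> omega

/-- shrinking, same statement used in reverse -/
lemma conv_mul (ω t : ℝ) (B1 B2 : ℕ) (a b : ℤ → ℂ)
    (hb : ∀ l : ℤ, l ∉ Finset.Icc (-(B2:ℤ)) (B2:ℤ) → b l = 0) :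
    (∑ k ∈ Finset.Icc (-(B1:ℤ)) (B1:ℤ), a k * Efn ω k t)
      * (∑ l ∈ Finset.Icc (-(B2:ℤ)) (B2:ℤ), b l * Efn ω l t)
    = ∑ n ∈ Finset.Icc (-((B1:ℤ)+B2)) ((B1:ℤ)+B2),
        (∑ k ∈ Finset.Icc (-(B1:ℤ)) (B1:ℤ), a k * b (n - k)) * Efn ω n t := by
  have key : ∀ k ∈ Finset.Icc (-(B1:ℤ)) (B1:ℤ),
      ∑ n ∈ Finset.Icc (-((B1:ℤ)+B2)) ((B1:ℤ)+B2), a k * b (n - k) * Efn ω n t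
      = (a k * Efn ω k t) * ∑ l ∈ Finset.Icc (-(B2:ℤ)) (B2:ℤ), b l * Efn ω l t := by
    intro k hk
    simp only [Finset.mem_Icc] at hk
    have hsub : Finset.Icc (k + -(B2:ℤ)) (k + (B2:ℤ))
        ⊆ Finset.Icc (-((B1:ℤ)+B2)) ((B1:ℤ)+B2) :=
      Finset.Icc_subset_Icc (by omega) (by omega)
    rw [← Finset.sum_subset hsub (fun n hn hnn => by
      simp only [Finset.mem_Icc] at hn hnn
      rw [hb (n - k) (by simp only [Finset.mem_Icc]; omega), mul_zero, zero_mul])]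
    rw [← Finset.map_add_left_Icc, Finset.sum_map]
    rw [Finset.mul_sum]
    refine Finset.sum_congr rfl fun l hl => ?_
    simp only [addLeftEmbedding_apply, add_sub_cancel_left]
    rw [Efn_add]
    ring
  calc (∑ k ∈ Finset.Icc (-(B1:ℤ)) (B1:ℤ), a k * Efn ω k t)
      * (∑ l ∈ Finset.Icc (-(B2:ℤ)) (B2:ℤ), b l * Efn ω l t)
      = ∑ k ∈ Finset.Icc (-(B1:ℤ)) (B1:ℤ),
          (a k * Efn ω k t) * ∑ l ∈ Finset.Icc (-(B2:ℤ)) (B2:ℤ), b l * Efn ω l t := by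
        rw [Finset.sum_mul]
    _ = ∑ k ∈ Finset.Icc (-(B1:ℤ)) (B1:ℤ), ∑ n ∈ Finset.Icc (-((B1:ℤ)+B2)) ((B1:ℤ)+B2),
          a k * b (n - k) * Efn ω n t := (Finset.sum_congr rfl fun k hk => (key k hk).symm)
    _ = ∑ n ∈ Finset.Icc (-((B1:ℤ)+B2)) ((B1:ℤ)+B2),
          (∑ k ∈ Finset.Icc (-(B1:ℤ)) (B1:ℤ), a k * b (n - k)) * Efn ω n t := by
        rw [Finset.sum_comm]
        exact Finset.sum_congr rfl fun n hn => by rw [Finset.sum_mul]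

/-- the scalar spectrum of a multiharmonic family -/
def Ssp (a : ℕ → Pt → ℂ) (k : ℤ) : Pt → ℂ :=
  if k = 0 then a 0 else if 0 < k then fun y => (1/2 : ℂ) * a k.toNat y
  else fun y => (1/2 : ℂ) * star (a (-k).toNat y)

lemma Ssp_zero (a : ℕ → Pt → ℂ) : Ssp a 0 = a 0 := rfl

lemma Ssp_coe (a : ℕ → Pt → ℂ) (k : ℕ) (hk : k ≠ 0) :
    Ssp a (k:ℤ) = fun y => (1/2 : ℂ) * a k y := by
  unfold Ssp
  rw [if_neg (by exact_mod_cast hk), if_pos (by exact_mod_cast Nat.pos_of_ne_zero hk)]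
  simp

lemma Ssp_neg_coe (a : ℕ → Pt → ℂ) (k : ℕ) (hk : k ≠ 0) :
    Ssp a (-(k:ℤ)) = fun y => (1/2 : ℂ) * star (a k y) := by
  unfold Ssp
  rw [if_neg (by omega), if_neg (by omega)]
  simp

/-- main scalar expansion -/
lemma Ssp_expand (ω : ℝ) (M : ℕ) (a : ℕ → Pt → ℂ) (g : ℝ → Pt → ℂ)
    (hg : ∀ t y, g t y = a 0 y + (1/2 : ℂ) * ∑ k ∈ Finset.range M,
      (a (k+1) y * Complex.exp (-(Complex.I * ((k:ℂ)+1) * ω * t))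
        + star (a (k+1) y) * Complex.exp (Complex.I * ((k:ℂ)+1) * ω * t)))
    (t : ℝ) (y : Pt) :
    g t y = ∑ k ∈ Finset.Icc (-(M:ℤ)) (M:ℤ), Ssp a k y * Efn ω k t := by
  rw [sum_Icc_symm M (fun k => Ssp a k y * Efn ω k t), hg t y]
  rw [Ssp_zero, Efn_zero, mul_one, Finset.mul_sum]
  congr 1
  refine Finset.sum_congr rfl fun k hk => ?_
  have h1 : ((k:ℤ)+1) = (((k+1:ℕ)):ℤ) := by push_cast; ring
  have h2 : Efn ω ((k:ℤ)+1) t = Complex.exp (-(Complex.I * ((k:ℂ)+1) * ω * t)) := by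
    unfold Efn; congr 2; push_cast; ring
  have h3 : Efn ω (-((k:ℤ)+1)) t = Complex.exp (Complex.I * ((k:ℂ)+1) * ω * t) := by
    unfold Efn; congr 1; push_cast; ring
  rw [h1] at h2 ⊢
  rw [Ssp_coe a (k+1) (Nat.succ_ne_zero k), h2]
  rw [show (-((k:ℤ)+1)) = (-((k+1:ℕ):ℤ)) by push_cast; ring] at h3
  rw [Ssp_neg_coe a (k+1) (Nat.succ_ne_zero k), h3]
  dsimp only
  ring

/-- support of the spectrum -/
lemma Ssp_vanish (a : ℕ → Pt → ℂ) (M : ℕ) (hz : ∀ n, M < n → ∀ y, a n y = 0)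
    (k : ℤ) (hk : (M:ℤ) < |k|) (y : Pt) : Ssp a k y = 0 := by
  unfold Ssp
  rcases abs_cases k with ⟨ha1, ha2⟩ | ⟨ha1, ha2⟩
  all_goals rcases lt_trichotomy k 0 with h | h | h
  all_goals first
  | omega
  | (rw [if_neg (by omega), if_neg (by omega), hz (-k).toNat (by omega) y]; simp)
  | (rw [if_neg (by omega), if_pos h, hz k.toNat (by omega) y]; simp)

/-! ### smoothness of spectra -/

section smoothness
variable {Ω : Set Pt}

lemma fam_contDiffOn {n : ℕ∞} {M : ℕ} {a : ℕ → Pt → ℂ}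
    (ha : ∀ m ≤ M, ContDiffOn ℝ n (a m) Ω) (hz : ∀ m, M < m → ∀ y, a m y = 0) :
    ∀ m : ℕ, ContDiffOn ℝ n (a m) Ω := fun m => by
  by_cases h : m ≤ M
  · exact ha m h
  · rw [show a m = fun _ => 0 from funext (hz m (by omega))]
    exact contDiffOn_const

lemma Ssp_contDiffOn {n : ℕ∞} {M : ℕ} {a : ℕ → Pt → ℂ}
    (ha : ∀ m ≤ M, ContDiffOn ℝ n (a m) Ω) (hz : ∀ m, M < m → ∀ y, a m y = 0) (k : ℤ) :
    ContDiffOn ℝ n (Ssp a k) Ω := by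
  have A := fam_contDiffOn ha hz
  unfold Ssp
  split_ifs with h1 h2
  · exact A 0
  · exact contDiffOn_const.mul (A k.toNat)
  · exact contDiffOn_const.mul (contDiffOn_star (A (-k).toNat))

lemma Ssp_diffAt (hΩ : IsOpen Ω) {M : ℕ} {a : ℕ → Pt → ℂ}
    (ha : ∀ m ≤ M, ContDiffOn ℝ 1 (a m) Ω) (hz : ∀ m, M < m → ∀ y, a m y = 0)
    {x : Pt} (hx : x ∈ Ω) (k : ℤ) : DifferentiableAt ℝ (Ssp a k) x :=
  ((Ssp_contDiffOn ha hz k).differentiableOn (by simp)).differentiableAt (hΩ.mem_nhds hx)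

lemma Ssp_pd_diffAt (hΩ : IsOpen Ω) {M : ℕ} {a : ℕ → Pt → ℂ}
    (ha : ∀ m ≤ M, ContDiffOn ℝ 2 (a m) Ω) (hz : ∀ m, M < m → ∀ y, a m y = 0)
    {x : Pt} (hx : x ∈ Ω) (k : ℤ) (i : Fin 2) :
    DifferentiableAt ℝ (fun y => pd i (Ssp a k) y) x :=
  diffAt_pd hΩ (Ssp_contDiffOn ha hz k) hx i

/-! ### expansions of spatial derivatives -/

lemma pd_expand (hΩ : IsOpen Ω) (ω : ℝ) {M : ℕ} {a : ℕ → Pt → ℂ}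
    (ha : ∀ m ≤ M, ContDiffOn ℝ 1 (a m) Ω) (hz : ∀ m, M < m → ∀ y, a m y = 0)
    (t : ℝ) {g : Pt → ℂ}
    (hge : ∀ y, g y = ∑ k ∈ Finset.Icc (-(M:ℤ)) (M:ℤ), Ssp a k y * Efn ω k t)
    {x : Pt} (hx : x ∈ Ω) (i : Fin 2) :
    pd i g x = ∑ k ∈ Finset.Icc (-(M:ℤ)) (M:ℤ), pd i (Ssp a k) x * Efn ω k t := by
  rw [show g = fun y => ∑ k ∈ Finset.Icc (-(M:ℤ)) (M:ℤ), Ssp a k y * Efn ω k t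
    from funext hge]
  rw [pd_sum _ _ (fun k _ => (Ssp_diffAt hΩ ha hz hx k).mul_const _) i]
  exact Finset.sum_congr rfl fun k _ => pd_mul_const _ _ _ _

lemma pd_pd_expand (hΩ : IsOpen Ω) (ω : ℝ) {M : ℕ} {a : ℕ → Pt → ℂ}
    (ha : ∀ m ≤ M, ContDiffOn ℝ 2 (a m) Ω) (hz : ∀ m, M < m → ∀ y, a m y = 0)
    (t : ℝ) {g : Pt → ℂ}
    (hge : ∀ y, g y = ∑ k ∈ Finset.Icc (-(M:ℤ)) (M:ℤ), Ssp a k y * Efn ω k t)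
    {x : Pt} (hx : x ∈ Ω) (i : Fin 2) :
    pd i (fun y => pd i g y) x
      = ∑ k ∈ Finset.Icc (-(M:ℤ)) (M:ℤ), pd i (fun y => pd i (Ssp a k) y) x * Efn ω k t := by
  have h1 : ∀ y ∈ Ω, pd i g y
      = ∑ k ∈ Finset.Icc (-(M:ℤ)) (M:ℤ), pd i (Ssp a k) y * Efn ω k t := fun y hy =>
    pd_expand hΩ ω (fun m hm => (ha m hm).of_le one_le_two) hz t hge hy i
  rw [pd_congr_of_isOpen hΩ hx h1 i]
  rw [pd_sum _ _ (fun k _ => (Ssp_pd_diffAt hΩ ha hz hx k i).mul_const _) i]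
  exact Finset.sum_congr rfl fun k _ => pd_mul_const _ _ _ _

lemma lap_expand (hΩ : IsOpen Ω) (ω : ℝ) {M : ℕ} {a : ℕ → Pt → ℂ}
    (ha : ∀ m ≤ M, ContDiffOn ℝ 2 (a m) Ω) (hz : ∀ m, M < m → ∀ y, a m y = 0)
    (t : ℝ) {g : Pt → ℂ}
    (hge : ∀ y, g y = ∑ k ∈ Finset.Icc (-(M:ℤ)) (M:ℤ), Ssp a k y * Efn ω k t)
    {x : Pt} (hx : x ∈ Ω) :
    lap g x = ∑ k ∈ Finset.Icc (-(M:ℤ)) (M:ℤ), lap (Ssp a k) x * Efn ω k t := by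
  unfold lap
  rw [Finset.sum_congr rfl fun i _ => pd_pd_expand hΩ ω ha hz t hge hx i]
  rw [Finset.sum_comm]
  exact Finset.sum_congr rfl fun k _ => by rw [Finset.sum_mul]

lemma deriv_expand (ω : ℝ) {B : ℕ} (c : ℤ → ℂ) {g : ℝ → ℂ}
    (hg : ∀ s, g s = ∑ k ∈ Finset.Icc (-(B:ℤ)) (B:ℤ), c k * Efn ω k s) (t : ℝ) :
    deriv g t = ∑ k ∈ Finset.Icc (-(B:ℤ)) (B:ℤ), -(Complex.I * k * ω) * c k * Efn ω k t := by
  rw [show g = fun s => ∑ k ∈ Finset.Icc (-(B:ℤ)) (B:ℤ), c k * Efn ω k s from funext hg]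
  rw [(HasDerivAt.fun_sum (fun k _ => (hasDerivAt_Efn ω k t).const_mul (c k))).deriv]
  exact Finset.sum_congr rfl fun k _ => by ring

end smoothness

/-! ### small operator lemmas -/

lemma pd_of_zero_fun {w : Pt → ℂ} (hw : ∀ y, w y = 0) (i : Fin 2) (x : Pt) :
    pd i w x = 0 := by
  rw [show w = fun _ => (0:ℂ) from funext hw]
  exact pd_const i 0 x

lemma adv_zero_left {u w : Pt → Fin 2 → ℂ} {x : Pt} (hu : ∀ i, u x i = 0) (j : Fin 2) :
    adv u w x j = 0 := by
  unfold adv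
  exact Finset.sum_eq_zero fun i _ => by rw [hu i, zero_mul]

lemma adv_zero_right {u w : Pt → Fin 2 → ℂ} {x : Pt} {j : Fin 2} (hw : ∀ y, w y j = 0) :
    adv u w x j = 0 := by
  unfold adv
  exact Finset.sum_eq_zero fun i _ => by rw [pd_of_zero_fun hw, mul_zero]

lemma vdiv_zero_fun {w : Pt → Fin 2 → ℂ} {x : Pt} (hw : ∀ y i, w y i = 0) :
    vdiv w x = 0 := by
  unfold vdiv
  exact Finset.sum_eq_zero fun i _ => pd_of_zero_fun (fun y => hw y i) i x

lemma lap_const_mul (g : Pt → ℂ) (c : ℂ) (x : Pt) :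
    lap (fun y => c * g y) x = c * lap g x := by
  unfold lap
  rw [Finset.mul_sum]
  refine Finset.sum_congr rfl fun i _ => ?_
  rw [show (fun y => pd i (fun z => c * g z) y) = fun y => c * pd i g y
    from funext fun y => pd_const_mul g c y i]
  exact pd_const_mul _ c x i

lemma lap_star (g : Pt → ℂ) (x : Pt) :
    lap (fun y => star (g y)) x = star (lap g x) := by
  unfold lap
  rw [star_sum]
  refine Finset.sum_congr rfl fun i _ => ?_
  rw [show (fun y => pd i (fun z => star (g z)) y) = fun y => star (pd i g y)
    from funext fun y => pd_star g y i]
  exact pd_star _ x i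

lemma lap_congr_of_isOpen {g₁ g₂ : Pt → ℂ} {s : Set Pt} (hs : IsOpen s) {x : Pt}
    (hx : x ∈ s) (h : ∀ y ∈ s, g₁ y = g₂ y) : lap g₁ x = lap g₂ x := by
  unfold lap
  refine Finset.sum_congr rfl fun i _ => ?_
  exact pd_congr_of_isOpen hs hx (fun y hy => pd_congr_of_isOpen hs hy h i) i

/-! ### star symmetry of spectra -/

lemma star_half_mul (z : ℂ) : star ((1/2 : ℂ) * z) = (1/2 : ℂ) * star z := by
  rw [star_mul']
  norm_num

lemma Ssp_neg_eq_star (a : ℕ → Pt → ℂ) (k : ℤ) (hk : k ≠ 0) :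
    Ssp a (-k) = fun y => star (Ssp a k y) := by
  funext y
  unfold Ssp
  rcases lt_or_gt_of_ne hk with h | h
  · rw [if_neg (by omega), if_pos (by omega), if_neg (by omega), if_neg (by omega)]
    rw [star_half_mul, star_star]
  · rw [if_neg (by omega), if_neg (by omega), if_neg (by omega), if_pos h]
    rw [star_half_mul, neg_neg]

lemma Ssp_neg_val {a : ℕ → Pt → ℂ} {y : Pt} (h0 : star (a 0 y) = a 0 y) (k : ℤ) :
    Ssp a (-k) y = star (Ssp a k y) := by
  rcases eq_or_ne k 0 with rfl | hk
  · rw [neg_zero, Ssp_zero, h0]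
  · rw [Ssp_neg_eq_star a k hk]

lemma pd_Ssp_neg {Ω : Set Pt} (hΩ : IsOpen Ω) {a : ℕ → Pt → ℂ}
    (h0 : ∀ y ∈ Ω, star (a 0 y) = a 0 y) {x : Pt} (hx : x ∈ Ω) (k : ℤ) (i : Fin 2) :
    pd i (Ssp a (-k)) x = star (pd i (Ssp a k) x) := by
  rcases eq_or_ne k 0 with rfl | hk
  · rw [neg_zero, ← pd_star]
    exact (pd_congr_of_isOpen hΩ hx (fun y hy => (h0 y hy).symm) i)
  · rw [Ssp_neg_eq_star a k hk, pd_star]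

lemma lap_Ssp_neg {Ω : Set Pt} (hΩ : IsOpen Ω) {a : ℕ → Pt → ℂ}
    (h0 : ∀ y ∈ Ω, star (a 0 y) = a 0 y) {x : Pt} (hx : x ∈ Ω) (k : ℤ) :
    lap (Ssp a (-k)) x = star (lap (Ssp a k) x) := by
  rcases eq_or_ne k 0 with rfl | hk
  · rw [neg_zero, ← lap_star]
    exact lap_congr_of_isOpen hΩ hx (fun y hy => (h0 y hy).symm)
  · rw [Ssp_neg_eq_star a k hk]
    exact lap_star _ x

/-! ### the vector/scalar spectra of the solution families -/

def WV (V : ℕ → Pt → Fin 2 → ℂ) (k : ℤ) : Pt → Fin 2 → ℂ :=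
  fun y j => Ssp (fun n z => V n z j) k y

def QP (P : ℕ → Pt → ℂ) (k : ℤ) : Pt → ℂ := Ssp P k

lemma WV_comp (V : ℕ → Pt → Fin 2 → ℂ) (k : ℤ) (j : Fin 2) :
    (fun y => WV V k y j) = Ssp (fun n z => V n z j) k := rfl

/-! ### the frequency-domain coefficients of the time-domain equations -/

def rterm (f : Pt → Fin 2 → ℂ) (x : Pt) (j : Fin 2) (n : ℤ) : ℂ :=
  if n = 1 then (1/2 : ℂ) * f x j else if n = -1 then (1/2 : ℂ) * star (f x j) else 0

def cmom (ω ν : ℝ) (M : ℕ) (V : ℕ → Pt → Fin 2 → ℂ) (P : ℕ → Pt → ℂ)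
    (f : Pt → Fin 2 → ℂ) (x : Pt) (j : Fin 2) (n : ℤ) : ℂ :=
  -(Complex.I * n * ω) * WV V n x j - (ν:ℂ) * lap (fun y => WV V n y j) x
    + pd j (QP P n) x
    + (∑ k ∈ Finset.Icc (-(((2*M+1 : ℕ) : ℤ))) (((2*M+1 : ℕ) : ℤ)), adv (WV V k) (WV V (n - k)) x j)
    - rterm f x j n

def ccon (ω c : ℝ) (M : ℕ) (V : ℕ → Pt → Fin 2 → ℂ) (P : ℕ → Pt → ℂ)
    (x : Pt) (n : ℤ) : ℂ :=
  -(Complex.I * n * ω) * QP P n x + (c:ℂ)^2 * vdiv (WV V n) x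
    + ∑ k ∈ Finset.Icc (-(((2*M+1 : ℕ) : ℤ))) (((2*M+1 : ℕ) : ℤ)),
        vdiv (fun y i => QP P k y * WV V (n - k) y i) x

/-! ### vanishing lemmas -/

section vanish
variable {M : ℕ} {V : ℕ → Pt → Fin 2 → ℂ} {P : ℕ → Pt → ℂ}

lemma WV_vanish (hzV : ∀ m, M < m → ∀ y j, V m y j = 0) {k : ℤ} (hk : (M:ℤ) < |k|)
    (y : Pt) (j : Fin 2) : WV V k y j = 0 :=
  Ssp_vanish _ M (fun n hn y' => hzV n hn y' j) k hk y

lemma QP_vanish (hzP : ∀ m, M < m → ∀ y, P m y = 0) {k : ℤ} (hk : (M:ℤ) < |k|)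
    (y : Pt) : QP P k y = 0 :=
  Ssp_vanish _ M hzP k hk y

lemma advcoef_vanish (hzV : ∀ m, M < m → ∀ y j, V m y j = 0) {n : ℤ}
    (hn : ((2*M+1 : ℕ) : ℤ) < |n|) (x : Pt) (j : Fin 2) :
    ∑ k ∈ Finset.Icc (-(((2*M+1 : ℕ) : ℤ))) (((2*M+1 : ℕ) : ℤ)), adv (WV V k) (WV V (n - k)) x j = 0 := by
  refine Finset.sum_eq_zero fun k hk => ?_
  simp only [Finset.mem_Icc] at hk
  by_cases hkM : (M:ℤ) < |k|
  · exact adv_zero_left (fun i => WV_vanish hzV hkM x i) j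
  · have hnk : (M:ℤ) < |n - k| := by
      rcases abs_cases k with ⟨h1, h2⟩ | ⟨h1, h2⟩ <;>
      rcases abs_cases n with ⟨h3, h4⟩ | ⟨h3, h4⟩ <;>
      rcases abs_cases (n - k) with ⟨h5, h6⟩ | ⟨h5, h6⟩ <;> omega
    exact adv_zero_right (fun y => WV_vanish hzV hnk y j)

lemma divcoef_vanish (hzV : ∀ m, M < m → ∀ y j, V m y j = 0)
    (hzP : ∀ m, M < m → ∀ y, P m y = 0) {n : ℤ}
    (hn : ((2*M+1 : ℕ) : ℤ) < |n|) (x : Pt) :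
    ∑ k ∈ Finset.Icc (-(((2*M+1 : ℕ) : ℤ))) (((2*M+1 : ℕ) : ℤ)),
      vdiv (fun y i => QP P k y * WV V (n - k) y i) x = 0 := by
  refine Finset.sum_eq_zero fun k hk => ?_
  simp only [Finset.mem_Icc] at hk
  by_cases hkM : (M:ℤ) < |k|
  · exact vdiv_zero_fun (fun y i => by rw [QP_vanish hzP hkM y, zero_mul])
  · have hnk : (M:ℤ) < |n - k| := by
      rcases abs_cases k with ⟨h1, h2⟩ | ⟨h1, h2⟩ <;>
      rcases abs_cases n with ⟨h3, h4⟩ | ⟨h3, h4⟩ <;>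
      rcases abs_cases (n - k) with ⟨h5, h6⟩ | ⟨h5, h6⟩ <;> omega
    exact vdiv_zero_fun (fun y i => by rw [WV_vanish hzV hnk y i, mul_zero])

end vanish

/-! ### the right-hand side as a trigonometric sum -/

lemma rterm_sum (ω : ℝ) (B : ℕ) (hB : 1 ≤ B) (f : Pt → Fin 2 → ℂ) (x : Pt) (j : Fin 2)
    (t : ℝ) :
    (((f x j * Complex.exp (-(Complex.I * ω * t))).re : ℝ) : ℂ)
      = ∑ n ∈ Finset.Icc (-(B:ℤ)) (B:ℤ), rterm f x j n * Efn ω n t := by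
  have hsub : ({-1, 1} : Finset ℤ) ⊆ Finset.Icc (-(B:ℤ)) (B:ℤ) := by
    intro n hn
    simp only [Finset.mem_insert, Finset.mem_singleton] at hn
    simp only [Finset.mem_Icc]
    rcases hn with rfl | rfl <;> omega
  rw [← Finset.sum_subset hsub (fun n _ hn => by
    simp only [Finset.mem_insert, Finset.mem_singleton, not_or] at hn
    rw [rterm, if_neg hn.2, if_neg hn.1, zero_mul])]
  rw [Finset.sum_pair (by norm_num : (-1:ℤ) ≠ 1)]
  have hE1 : Complex.exp (-(Complex.I * ω * t)) = Efn ω 1 t := by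
    unfold Efn; norm_num
  have hstar : star (f x j * Complex.exp (-(Complex.I * ω * t)))
      = star (f x j) * Efn ω (-1) t := by
    rw [star_mul', hE1, Efn_star, mul_comm]
  set z := f x j * Complex.exp (-(Complex.I * ω * t)) with hzdef
  have haddconj := Complex.add_conj z
  have : ((z.re : ℝ) : ℂ) = (1/2 : ℂ) * (z + (starRingEnd ℂ) z) := by
    rw [haddconj]; push_cast; ring
  rw [this, show (starRingEnd ℂ) z = star z from rfl, hstar]
  rw [rterm, rterm, if_neg (by norm_num), if_pos rfl, if_pos rfl]
  rw [hzdef, hE1]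
  ring

/-! ### bridging rfl-lemmas -/

lemma adv_WV (V : ℕ → Pt → Fin 2 → ℂ) (k l : ℤ) (x : Pt) (j : Fin 2) :
    adv (WV V k) (WV V l) x j
      = ∑ i, Ssp (fun n z => V n z i) k x * pd i (Ssp (fun n z => V n z j) l) x := rfl

lemma vdiv_WV (V : ℕ → Pt → Fin 2 → ℂ) (n : ℤ) (x : Pt) :
    vdiv (WV V n) x = ∑ i, pd i (Ssp (fun m z => V m z i) n) x := rfl

lemma vdiv_QW (V : ℕ → Pt → Fin 2 → ℂ) (P : ℕ → Pt → ℂ) (k l : ℤ) (x : Pt) :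
    vdiv (fun y i => QP P k y * WV V l y i) x
      = ∑ i, pd i (fun y => Ssp P k y * Ssp (fun m z => V m z i) l y) x := rfl

lemma WV_apply (V : ℕ → Pt → Fin 2 → ℂ) (n : ℤ) (x : Pt) (j : Fin 2) :
    WV V n x j = Ssp (fun m z => V m z j) n x := rfl

/-! ### master expansion : momentum -/

lemma mom_master {Ω : Set Pt} (hΩ : IsOpen Ω) (ω ν : ℝ) (M : ℕ)
    (V : ℕ → Pt → Fin 2 → ℂ) (P : ℕ → Pt → ℂ) (f : Pt → Fin 2 → ℂ)
    (hVreg : ∀ k ≤ M, ContDiffOn ℝ 2 (V k) Ω)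
    (hPreg : ∀ k ≤ M, ContDiffOn ℝ 1 (P k) Ω)
    (hzero : ∀ k : ℕ, M < k → (∀ x : Pt, ∀ j : Fin 2, V k x j = 0) ∧ ∀ x : Pt, P k x = 0)
    (v : ℝ → Pt → Fin 2 → ℂ) (p : ℝ → Pt → ℂ)
    (hv : ∀ t : ℝ, ∀ x : Pt, ∀ j : Fin 2,
      v t x j = V 0 x j + (1 / 2) * ∑ k ∈ Finset.range M,
        (V (k + 1) x j * Complex.exp (-(Complex.I * ((k : ℂ) + 1) * ω * t))
          + star (V (k + 1) x j) * Complex.exp (Complex.I * ((k : ℂ) + 1) * ω * t)))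
    (hp : ∀ t : ℝ, ∀ x : Pt,
      p t x = P 0 x + (1 / 2) * ∑ k ∈ Finset.range M,
        (P (k + 1) x * Complex.exp (-(Complex.I * ((k : ℂ) + 1) * ω * t))
          + star (P (k + 1) x) * Complex.exp (Complex.I * ((k : ℂ) + 1) * ω * t)))
    {x : Pt} (hx : x ∈ Ω) (t : ℝ) (j : Fin 2) :
    deriv (fun s => v s x j) t + adv (v t) (v t) x j + pd j (p t) x
        - (ν:ℂ) * lap (fun y => v t y j) x
        - (((f x j * Complex.exp (-(Complex.I * ω * t))).re : ℝ) : ℂ)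
      = ∑ n ∈ Finset.Icc (-((2*M+1 : ℕ) : ℤ)) ((2*M+1 : ℕ) : ℤ),
          cmom ω ν M V P f x j n * Efn ω n t := by
  -- component families
  have hVcomp : ∀ j' : Fin 2, ∀ m, m ≤ M → ContDiffOn ℝ 2 (fun y => V m y j') Ω :=
    fun j' m hm => (contDiffOn_pi.mp (hVreg m hm)) j'
  have hzV : ∀ j' : Fin 2, ∀ m, M < m → ∀ y, V m y j' = 0 :=
    fun j' m hm y => (hzero m hm).1 y j'
  have hzP : ∀ m, M < m → ∀ y, P m y = 0 := fun m hm y => (hzero m hm).2 y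
  have hA2 : ∀ j' : Fin 2, ∀ m, ContDiffOn ℝ 2 (fun y => V m y j') Ω :=
    fun j' => fam_contDiffOn (hVcomp j') (hzV j')
  have hP1 : ∀ m, ContDiffOn ℝ 1 (P m) Ω := fam_contDiffOn hPreg hzP
  have haB2 : ∀ j' : Fin 2, ∀ m, m ≤ 2*M+1 → ContDiffOn ℝ 2 (fun y => V m y j') Ω :=
    fun j' m _ => hA2 j' m
  have haB1 : ∀ j' : Fin 2, ∀ m, m ≤ 2*M+1 → ContDiffOn ℝ 1 (fun y => V m y j') Ω :=
    fun j' m _ => (hA2 j' m).of_le one_le_two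
  have hpB1 : ∀ m, m ≤ 2*M+1 → ContDiffOn ℝ 1 (P m) Ω := fun m _ => hP1 m
  have hzVB : ∀ j' : Fin 2, ∀ m, 2*M+1 < m → ∀ y, V m y j' = 0 :=
    fun j' m hm => hzV j' m (by omega)
  have hzPB : ∀ m, 2*M+1 < m → ∀ y, P m y = 0 := fun m hm => hzP m (by omega)
  -- padded expansions of v and p
  have hvB : ∀ j' : Fin 2, ∀ s : ℝ, ∀ y : Pt,
      v s y j' = ∑ k ∈ Finset.Icc (-((2*M+1:ℕ):ℤ)) ((2*M+1:ℕ):ℤ),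
        Ssp (fun n z => V n z j') k y * Efn ω k s := by
    intro j' s y
    rw [Ssp_expand ω M (fun n z => V n z j') (fun s y => v s y j')
      (fun s y => hv s y j') s y]
    exact sum_Icc_pad M (2*M+1) (by omega) _ (fun k hk => by
      rw [Ssp_vanish _ M (hzV j') k hk y, zero_mul])
  have hpB : ∀ s : ℝ, ∀ y : Pt,
      p s y = ∑ k ∈ Finset.Icc (-((2*M+1:ℕ):ℤ)) ((2*M+1:ℕ):ℤ),
        Ssp P k y * Efn ω k s := by
    intro s y
    rw [Ssp_expand ω M P p hp s y]
    exact sum_Icc_pad M (2*M+1) (by omega) _ (fun k hk => by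
      rw [Ssp_vanish _ M hzP k hk y, zero_mul])
  -- individual pieces
  have P1 : deriv (fun s => v s x j) t
      = ∑ k ∈ Finset.Icc (-((2*M+1:ℕ):ℤ)) ((2*M+1:ℕ):ℤ),
          -(Complex.I * k * ω) * Ssp (fun n z => V n z j) k x * Efn ω k t :=
    deriv_expand ω (fun k => Ssp (fun n z => V n z j) k x) (fun s => hvB j s x) t
  have P2 : pd j (p t) x
      = ∑ k ∈ Finset.Icc (-((2*M+1:ℕ):ℤ)) ((2*M+1:ℕ):ℤ),
          pd j (Ssp P k) x * Efn ω k t :=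
    pd_expand hΩ ω hpB1 hzPB t (fun y => hpB t y) hx j
  have P3 : lap (fun y => v t y j) x
      = ∑ k ∈ Finset.Icc (-((2*M+1:ℕ):ℤ)) ((2*M+1:ℕ):ℤ),
          lap (Ssp (fun n z => V n z j) k) x * Efn ω k t :=
    lap_expand hΩ ω (haB2 j) (hzVB j) t (fun y => hvB j t y) hx
  have hpdv : ∀ i : Fin 2, pd i (fun y => v t y j) x
      = ∑ k ∈ Finset.Icc (-((2*M+1:ℕ):ℤ)) ((2*M+1:ℕ):ℤ),
          pd i (Ssp (fun n z => V n z j) k) x * Efn ω k t :=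
    fun i => pd_expand hΩ ω (haB1 j) (hzVB j) t (fun y => hvB j t y) hx i
  have hbsupp : ∀ i : Fin 2, ∀ l : ℤ, l ∉ Finset.Icc (-((2*M+1:ℕ):ℤ)) ((2*M+1:ℕ):ℤ) →
      pd i (Ssp (fun n z => V n z j) l) x = 0 := by
    intro i l hl
    refine pd_of_zero_fun (fun y => Ssp_vanish _ M (hzV j) l ?_ y) i x
    simp only [Finset.mem_Icc, not_and_or, not_le] at hl
    rcases abs_cases l with ⟨h1, h2⟩ | ⟨h1, h2⟩ <;> omega
  have P4 : adv (v t) (v t) x j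
      = ∑ n ∈ Finset.Icc (-((2*M+1:ℕ):ℤ)) ((2*M+1:ℕ):ℤ),
          (∑ k ∈ Finset.Icc (-((2*M+1:ℕ):ℤ)) ((2*M+1:ℕ):ℤ),
            adv (WV V k) (WV V (n - k)) x j) * Efn ω n t := by
    have step1 : adv (v t) (v t) x j
        = ∑ i, ∑ n ∈ Finset.Icc (-(((2*M+1:ℕ):ℤ)+((2*M+1:ℕ):ℤ))) (((2*M+1:ℕ):ℤ)+((2*M+1:ℕ):ℤ)),
            (∑ k ∈ Finset.Icc (-((2*M+1:ℕ):ℤ)) ((2*M+1:ℕ):ℤ),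
              Ssp (fun n z => V n z i) k x * pd i (Ssp (fun n z => V n z j) (n - k)) x)
              * Efn ω n t := by
      unfold adv
      refine Finset.sum_congr rfl fun i _ => ?_
      rw [hvB i t x, hpdv i]
      exact conv_mul ω t (2*M+1) (2*M+1) _ _ (hbsupp i)
    rw [step1, Finset.sum_comm]
    rw [show (∑ n ∈ Finset.Icc (-(((2*M+1:ℕ):ℤ)+((2*M+1:ℕ):ℤ))) (((2*M+1:ℕ):ℤ)+((2*M+1:ℕ):ℤ)),
        ∑ i : Fin 2,
          (∑ k ∈ Finset.Icc (-((2*M+1:ℕ):ℤ)) ((2*M+1:ℕ):ℤ),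
            Ssp (fun n z => V n z i) k x * pd i (Ssp (fun n z => V n z j) (n - k)) x)
            * Efn ω n t)
      = ∑ n ∈ Finset.Icc (-(((2*M+1:ℕ):ℤ)+((2*M+1:ℕ):ℤ))) (((2*M+1:ℕ):ℤ)+((2*M+1:ℕ):ℤ)),
          (∑ k ∈ Finset.Icc (-((2*M+1:ℕ):ℤ)) ((2*M+1:ℕ):ℤ),
            adv (WV V k) (WV V (n - k)) x j) * Efn ω n t from
      Finset.sum_congr rfl fun n _ => by
        rw [← Finset.sum_mul]
        congr 1
        rw [Finset.sum_comm]
        exact Finset.sum_congr rfl fun k _ => (adv_WV V k (n-k) x j).symm]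
    -- shrink the range
    have hcast : (((2*M+1:ℕ):ℤ)+((2*M+1:ℕ):ℤ)) = (((2*M+1)+(2*M+1) : ℕ) : ℤ) := by
      push_cast; ring
    rw [hcast]
    refine (sum_Icc_pad (2*M+1) ((2*M+1)+(2*M+1)) (by omega) _ (fun n hn => ?_)).symm
    rw [advcoef_vanish (fun m hm y j' => (hzero m hm).1 y j') hn x j, zero_mul]
  have P5 := rterm_sum ω (2*M+1) (by omega) f x j t
  rw [P1, P2, P3, P4, P5, Finset.mul_sum]
  rw [← Finset.sum_add_distrib, ← Finset.sum_add_distrib, ← Finset.sum_sub_distrib,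
    ← Finset.sum_sub_distrib]
  refine Finset.sum_congr rfl fun n _ => ?_
  unfold cmom
  rw [WV_apply, show (fun y => WV V n y j) = Ssp (fun m z => V m z j) n from rfl,
    show QP P n = Ssp P n from rfl]
  ring

/-! ### master expansion : continuity -/

lemma con_master {Ω : Set Pt} (hΩ : IsOpen Ω) (ω c : ℝ) (M : ℕ)
    (V : ℕ → Pt → Fin 2 → ℂ) (P : ℕ → Pt → ℂ)
    (hVreg : ∀ k ≤ M, ContDiffOn ℝ 2 (V k) Ω)
    (hPreg : ∀ k ≤ M, ContDiffOn ℝ 1 (P k) Ω)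
    (hzero : ∀ k : ℕ, M < k → (∀ x : Pt, ∀ j : Fin 2, V k x j = 0) ∧ ∀ x : Pt, P k x = 0)
    (v : ℝ → Pt → Fin 2 → ℂ) (p : ℝ → Pt → ℂ)
    (hv : ∀ t : ℝ, ∀ x : Pt, ∀ j : Fin 2,
      v t x j = V 0 x j + (1 / 2) * ∑ k ∈ Finset.range M,
        (V (k + 1) x j * Complex.exp (-(Complex.I * ((k : ℂ) + 1) * ω * t))
          + star (V (k + 1) x j) * Complex.exp (Complex.I * ((k : ℂ) + 1) * ω * t)))
    (hp : ∀ t : ℝ, ∀ x : Pt,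
      p t x = P 0 x + (1 / 2) * ∑ k ∈ Finset.range M,
        (P (k + 1) x * Complex.exp (-(Complex.I * ((k : ℂ) + 1) * ω * t))
          + star (P (k + 1) x) * Complex.exp (Complex.I * ((k : ℂ) + 1) * ω * t)))
    {x : Pt} (hx : x ∈ Ω) (t : ℝ) :
    deriv (fun s => p s x) t + (c:ℂ) ^ 2 * vdiv (v t) x
        + vdiv (fun y i => p t y * v t y i) x
      = ∑ n ∈ Finset.Icc (-((2*M+1 : ℕ) : ℤ)) ((2*M+1 : ℕ) : ℤ),
          ccon ω c M V P x n * Efn ω n t := by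
  have hVcomp : ∀ j' : Fin 2, ∀ m, m ≤ M → ContDiffOn ℝ 2 (fun y => V m y j') Ω :=
    fun j' m hm => (contDiffOn_pi.mp (hVreg m hm)) j'
  have hzV : ∀ j' : Fin 2, ∀ m, M < m → ∀ y, V m y j' = 0 :=
    fun j' m hm y => (hzero m hm).1 y j'
  have hzP : ∀ m, M < m → ∀ y, P m y = 0 := fun m hm y => (hzero m hm).2 y
  have hA2 : ∀ j' : Fin 2, ∀ m, ContDiffOn ℝ 2 (fun y => V m y j') Ω :=
    fun j' => fam_contDiffOn (hVcomp j') (hzV j')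
  have hP1 : ∀ m, ContDiffOn ℝ 1 (P m) Ω := fam_contDiffOn hPreg hzP
  have haB1 : ∀ j' : Fin 2, ∀ m, m ≤ 2*M+1 → ContDiffOn ℝ 1 (fun y => V m y j') Ω :=
    fun j' m _ => (hA2 j' m).of_le one_le_two
  have hpB1 : ∀ m, m ≤ 2*M+1 → ContDiffOn ℝ 1 (P m) Ω := fun m _ => hP1 m
  have hzVB : ∀ j' : Fin 2, ∀ m, 2*M+1 < m → ∀ y, V m y j' = 0 :=
    fun j' m hm => hzV j' m (by omega)
  have hzPB : ∀ m, 2*M+1 < m → ∀ y, P m y = 0 := fun m hm => hzP m (by omega)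
  have hvB : ∀ j' : Fin 2, ∀ s : ℝ, ∀ y : Pt,
      v s y j' = ∑ k ∈ Finset.Icc (-((2*M+1:ℕ):ℤ)) ((2*M+1:ℕ):ℤ),
        Ssp (fun n z => V n z j') k y * Efn ω k s := by
    intro j' s y
    rw [Ssp_expand ω M (fun n z => V n z j') (fun s y => v s y j')
      (fun s y => hv s y j') s y]
    exact sum_Icc_pad M (2*M+1) (by omega) _ (fun k hk => by
      rw [Ssp_vanish _ M (hzV j') k hk y, zero_mul])
  have hpB : ∀ s : ℝ, ∀ y : Pt,
      p s y = ∑ k ∈ Finset.Icc (-((2*M+1:ℕ):ℤ)) ((2*M+1:ℕ):ℤ),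
        Ssp P k y * Efn ω k s := by
    intro s y
    rw [Ssp_expand ω M P p hp s y]
    exact sum_Icc_pad M (2*M+1) (by omega) _ (fun k hk => by
      rw [Ssp_vanish _ M hzP k hk y, zero_mul])
  -- pieces
  have C1 : deriv (fun s => p s x) t
      = ∑ k ∈ Finset.Icc (-((2*M+1:ℕ):ℤ)) ((2*M+1:ℕ):ℤ),
          -(Complex.I * k * ω) * Ssp P k x * Efn ω k t :=
    deriv_expand ω (fun k => Ssp P k x) (fun s => hpB s x) t
  have C2 : vdiv (v t) x
      = ∑ n ∈ Finset.Icc (-((2*M+1:ℕ):ℤ)) ((2*M+1:ℕ):ℤ), vdiv (WV V n) x * Efn ω n t := by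
    rw [show vdiv (v t) x = ∑ i, pd i (fun y => v t y i) x from rfl]
    rw [Finset.sum_congr rfl (fun i _ =>
      pd_expand hΩ ω (haB1 i) (hzVB i) t (fun y => hvB i t y) hx i)]
    rw [Finset.sum_comm]
    refine Finset.sum_congr rfl fun n _ => ?_
    rw [vdiv_WV, Finset.sum_mul]
  have C3 : vdiv (fun y i => p t y * v t y i) x
      = ∑ n ∈ Finset.Icc (-((2*M+1:ℕ):ℤ)) ((2*M+1:ℕ):ℤ),
          (∑ k ∈ Finset.Icc (-((2*M+1:ℕ):ℤ)) ((2*M+1:ℕ):ℤ),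
            vdiv (fun y i => QP P k y * WV V (n - k) y i) x) * Efn ω n t := by
    have hprod : ∀ i : Fin 2, ∀ y : Pt, p t y * v t y i
        = ∑ n ∈ Finset.Icc (-(((2*M+1:ℕ):ℤ)+((2*M+1:ℕ):ℤ))) (((2*M+1:ℕ):ℤ)+((2*M+1:ℕ):ℤ)),
            (∑ k ∈ Finset.Icc (-((2*M+1:ℕ):ℤ)) ((2*M+1:ℕ):ℤ),
              Ssp P k y * Ssp (fun n z => V n z i) (n - k) y) * Efn ω n t := by
      intro i y
      rw [hpB t y, hvB i t y]
      refine conv_mul ω t (2*M+1) (2*M+1) _ _ (fun l hl => ?_)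
      refine Ssp_vanish _ M (hzV i) l ?_ y
      simp only [Finset.mem_Icc, not_and_or, not_le] at hl
      rcases abs_cases l with ⟨h1, h2⟩ | ⟨h1, h2⟩ <;> omega
    have hdP : ∀ k : ℤ, DifferentiableAt ℝ (Ssp P k) x :=
      fun k => Ssp_diffAt hΩ hpB1 hzPB hx k
    have hdA : ∀ i : Fin 2, ∀ k : ℤ, DifferentiableAt ℝ (Ssp (fun n z => V n z i) k) x :=
      fun i k => Ssp_diffAt hΩ (haB1 i) (hzVB i) hx k
    have hpdi : ∀ i : Fin 2, pd i (fun y => p t y * v t y i) x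
        = ∑ n ∈ Finset.Icc (-(((2*M+1:ℕ):ℤ)+((2*M+1:ℕ):ℤ))) (((2*M+1:ℕ):ℤ)+((2*M+1:ℕ):ℤ)),
            (∑ k ∈ Finset.Icc (-((2*M+1:ℕ):ℤ)) ((2*M+1:ℕ):ℤ),
              pd i (fun y => Ssp P k y * Ssp (fun n z => V n z i) (n - k) y) x) * Efn ω n t := by
      intro i
      rw [show (fun y => p t y * v t y i)
          = fun y => ∑ n ∈ Finset.Icc (-(((2*M+1:ℕ):ℤ)+((2*M+1:ℕ):ℤ)))
              (((2*M+1:ℕ):ℤ)+((2*M+1:ℕ):ℤ)),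
              (∑ k ∈ Finset.Icc (-((2*M+1:ℕ):ℤ)) ((2*M+1:ℕ):ℤ),
                Ssp P k y * Ssp (fun n z => V n z i) (n - k) y) * Efn ω n t
        from funext (hprod i)]
      rw [pd_sum _ _ (fun n _ => DifferentiableAt.mul_const
        (DifferentiableAt.fun_sum (fun k _ => (hdP k).fun_mul (hdA i (n - k)))) _) i]
      exact Finset.sum_congr rfl fun n _ => by
        rw [pd_mul_const, pd_sum _ _ (fun k _ => (hdP k).fun_mul (hdA i (n - k))) i]
    rw [show vdiv (fun y i => p t y * v t y i) x
      = ∑ i, pd i (fun y => p t y * v t y i) x from rfl]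
    rw [Finset.sum_congr rfl (fun i _ => hpdi i)]
    rw [Finset.sum_comm]
    rw [show (∑ n ∈ Finset.Icc (-(((2*M+1:ℕ):ℤ)+((2*M+1:ℕ):ℤ))) (((2*M+1:ℕ):ℤ)+((2*M+1:ℕ):ℤ)),
        ∑ i : Fin 2,
          (∑ k ∈ Finset.Icc (-((2*M+1:ℕ):ℤ)) ((2*M+1:ℕ):ℤ),
            pd i (fun y => Ssp P k y * Ssp (fun n z => V n z i) (n - k) y) x) * Efn ω n t)
      = ∑ n ∈ Finset.Icc (-(((2*M+1:ℕ):ℤ)+((2*M+1:ℕ):ℤ))) (((2*M+1:ℕ):ℤ)+((2*M+1:ℕ):ℤ)),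
          (∑ k ∈ Finset.Icc (-((2*M+1:ℕ):ℤ)) ((2*M+1:ℕ):ℤ),
            vdiv (fun y i => QP P k y * WV V (n - k) y i) x) * Efn ω n t from
      Finset.sum_congr rfl fun n _ => by
        rw [← Finset.sum_mul]
        congr 1
        rw [Finset.sum_comm]
        exact Finset.sum_congr rfl fun k _ => (vdiv_QW V P k (n-k) x).symm]
    have hcast : (((2*M+1:ℕ):ℤ)+((2*M+1:ℕ):ℤ)) = (((2*M+1)+(2*M+1) : ℕ) : ℤ) := by
      push_cast; ring
    rw [hcast]
    refine (sum_Icc_pad (2*M+1) ((2*M+1)+(2*M+1)) (by omega) _ (fun n hn => ?_)).symm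
    rw [divcoef_vanish (fun m hm y j' => (hzero m hm).1 y j')
      (fun m hm y => (hzero m hm).2 y) hn x, zero_mul]
  rw [C1, C2, C3, Finset.mul_sum]
  rw [← Finset.sum_add_distrib, ← Finset.sum_add_distrib]
  refine Finset.sum_congr rfl fun n _ => ?_
  unfold ccon
  rw [show QP P n = Ssp P n from rfl]
  ring

/-! ### scaling and congruence helpers for adv and vdiv -/

lemma adv_smul_left (c : ℂ) (u w : Pt → Fin 2 → ℂ) (x : Pt) (j : Fin 2) :
    adv (fun y i => c * u y i) w x j = c * adv u w x j := by
  unfold adv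
  rw [Finset.mul_sum]
  exact Finset.sum_congr rfl fun i _ => by ring

lemma adv_smul_right (c : ℂ) (u w : Pt → Fin 2 → ℂ) (x : Pt) (j : Fin 2) :
    adv u (fun y i => c * w y i) x j = c * adv u w x j := by
  unfold adv
  rw [Finset.mul_sum]
  refine Finset.sum_congr rfl fun i _ => ?_
  rw [show (fun y => (fun y (i : Fin 2) => c * w y i) y j) = fun y => c * w y j from rfl]
  rw [pd_const_mul]
  ring

lemma vdiv_smul (c : ℂ) (w : Pt → Fin 2 → ℂ) (x : Pt) :
    vdiv (fun y i => c * w y i) x = c * vdiv w x := by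
  unfold vdiv
  rw [Finset.mul_sum]
  refine Finset.sum_congr rfl fun i _ => ?_
  rw [show (fun y => (fun y (i : Fin 2) => c * w y i) y i) = fun y => c * w y i from rfl]
  exact pd_const_mul _ c x i

lemma vdiv_congr_of_isOpen {F G : Pt → Fin 2 → ℂ} {s : Set Pt} (hs : IsOpen s) {x : Pt}
    (hx : x ∈ s) (h : ∀ y ∈ s, ∀ i, F y i = G y i) : vdiv F x = vdiv G x := by
  unfold vdiv
  exact Finset.sum_congr rfl fun i _ =>
    pd_congr_of_isOpen hs hx (fun y hy => h y hy i) i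

lemma vdiv_add {F G : Pt → Fin 2 → ℂ} {x : Pt}
    (hF : ∀ i : Fin 2, DifferentiableAt ℝ (fun y => F y i) x)
    (hG : ∀ i : Fin 2, DifferentiableAt ℝ (fun y => G y i) x) :
    vdiv (fun y i => F y i + G y i) x = vdiv F x + vdiv G x := by
  unfold vdiv
  rw [← Finset.sum_add_distrib]
  exact Finset.sum_congr rfl fun i _ => pd_add (hF i) (hG i) i

lemma adv_congr_right {u w w' : Pt → Fin 2 → ℂ} {s : Set Pt} (hs : IsOpen s) {x : Pt}
    (hx : x ∈ s) {j : Fin 2} (h : ∀ y ∈ s, w y j = w' y j) :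
    adv u w x j = adv u w' x j := by
  unfold adv
  exact Finset.sum_congr rfl fun i _ => by
    rw [pd_congr_of_isOpen hs hx h i]

lemma adv_congr_left {u u' w : Pt → Fin 2 → ℂ} {x : Pt} {j : Fin 2}
    (h : ∀ i, u x i = u' x i) : adv u w x j = adv u' w x j := by
  unfold adv
  exact Finset.sum_congr rfl fun i _ => by rw [h i]

lemma lap_of_zero_fun {g : Pt → ℂ} (hg : ∀ y, g y = 0) (x : Pt) : lap g x = 0 := by
  unfold lap
  refine Finset.sum_eq_zero fun i _ => ?_
  exact pd_of_zero_fun (fun y => pd_of_zero_fun hg i y) i x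

/-! ### evaluation of the vector spectra -/

lemma WV_zero (V : ℕ → Pt → Fin 2 → ℂ) : WV V 0 = V 0 := rfl

lemma WV_coe (V : ℕ → Pt → Fin 2 → ℂ) (k : ℕ) (hk : k ≠ 0) :
    WV V (k:ℤ) = fun y i => (1/2 : ℂ) * V k y i := by
  funext y i
  rw [WV_apply, Ssp_coe _ k hk]

lemma WV_negcoe (V : ℕ → Pt → Fin 2 → ℂ) (k : ℕ) (hk : k ≠ 0) :
    WV V (-(k:ℤ)) = fun y i => (1/2 : ℂ) * star (V k y i) := by
  funext y i
  rw [WV_apply, Ssp_neg_coe _ k hk]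

lemma QP_zero (P : ℕ → Pt → ℂ) : QP P 0 = P 0 := rfl

lemma QP_coe (P : ℕ → Pt → ℂ) (k : ℕ) (hk : k ≠ 0) :
    QP P (k:ℤ) = fun y => (1/2 : ℂ) * P k y := Ssp_coe P k hk

lemma QP_negcoe (P : ℕ → Pt → ℂ) (k : ℕ) (hk : k ≠ 0) :
    QP P (-(k:ℤ)) = fun y => (1/2 : ℂ) * star (P k y) := Ssp_neg_coe P k hk

/-! ### identification of the convolution coefficients : momentum, positive modes -/

lemma conv_formula_pos {Ω : Set Pt} (hΩ : IsOpen Ω) (M : ℕ)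
    (V : ℕ → Pt → Fin 2 → ℂ)
    (hzV : ∀ m, M < m → ∀ y j, V m y j = 0)
    (hre : ∀ y ∈ Ω, ∀ j : Fin 2, (V 0 y j).im = 0)
    {x : Pt} (hx : x ∈ Ω) (n : ℕ) (hn1 : 1 ≤ n) (hnB : n ≤ 2*M+1) (j : Fin 2) :
    ∑ k ∈ Finset.Icc (-((2*M+1:ℕ):ℤ)) ((2*M+1:ℕ):ℤ), adv (WV V k) (WV V ((n:ℤ) - k)) x j
      = (1/2 : ℂ) * ((1/2) * ∑ m ∈ Finset.range (n+1), adv (V m) (V (n - m)) x j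
          + (1/2) * ∑' m : ℕ, (adv (V (m + n)) (cV (V m)) x j
              + adv (cV (V m)) (V (m + n)) x j)) := by
  obtain ⟨n', rfl⟩ : ∃ n'', n = n'' + 1 := ⟨n - 1, by omega⟩
  have hstar0 : ∀ y ∈ Ω, ∀ i : Fin 2, star (V 0 y i) = V 0 y i :=
    fun y hy i => Complex.conj_eq_iff_im.mpr (hre y hy i)
  -- evaluate the tsum
  rw [tsum_eq_sum (s := Finset.range (M+1)) (fun m hm => by
    simp only [Finset.mem_range, not_lt] at hm
    rw [adv_zero_left (fun i => hzV (m + (n'+1)) (by omega) x i) j,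
      adv_zero_right (fun y => hzV (m + (n'+1)) (by omega) y j), add_zero])]
  rw [Finset.sum_range_succ'
    (fun m => adv (V (m + (n'+1))) (cV (V m)) x j + adv (cV (V m)) (V (m + (n'+1))) x j) M]
  simp only [zero_add]
  rw [show adv (V (n'+1)) (cV (V 0)) x j = adv (V (n'+1)) (V 0) x j from
    adv_congr_right hΩ hx (fun y hy => hstar0 y hy j)]
  rw [show adv (cV (V 0)) (V (n'+1)) x j = adv (V 0) (V (n'+1)) x j from
    adv_congr_left (fun i => hstar0 x hx i)]
  rw [Finset.sum_add_distrib]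
  -- pad the two conjugate sums from `range M` to `range (2*M+1)`
  rw [Finset.sum_subset (Finset.range_subset_range.mpr (by omega : M ≤ 2*M+1))
    (fun m _ hm => by
      simp only [Finset.mem_range, not_lt] at hm
      exact adv_zero_right (w := cV (V (m+1)))
        (fun y => by rw [show cV (V (m+1)) y j = star (V (m+1) y j) from rfl,
          hzV (m+1) (by omega) y j, star_zero]))]
  rw [Finset.sum_subset (Finset.range_subset_range.mpr (by omega : M ≤ 2*M+1))
    (fun m _ hm => by
      simp only [Finset.mem_range, not_lt] at hm
      exact adv_zero_left (fun i => by
        rw [show cV (V (m+1)) x i = star (V (m+1) x i) from rfl,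
          hzV (m+1) (by omega) x i, star_zero]) j)]
  -- peel the quadratic finite sum
  rw [Finset.sum_range_succ' (fun m => adv (V m) (V (n'+1 - m)) x j) (n'+1)]
  rw [Finset.sum_range_succ (fun i => adv (V (i+1)) (V (n'+1 - (i+1))) x j) n']
  simp only [Nat.sub_zero, Nat.sub_self]
  -- expand the left-hand side
  rw [sum_Icc_symm (2*M+1) (fun k => adv (WV V k) (WV V ((((n'+1):ℕ):ℤ) - k)) x j)]
  rw [sub_zero, WV_zero, WV_coe V (n'+1) (by omega), adv_smul_right]
  rw [Finset.sum_add_distrib]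
  -- the positive part of the spectrum sum
  have hPosSum : ∑ k ∈ Finset.range (2*M+1),
      adv (WV V ((k:ℤ)+1)) (WV V ((((n'+1):ℕ):ℤ) - ((k:ℤ)+1))) x j
      = (1/4 : ℂ) * (∑ k ∈ Finset.range n', adv (V (k+1)) (V (n'+1 - (k+1))) x j)
        + (1/2) * adv (V (n'+1)) (V 0) x j
        + (1/4) * (∑ k ∈ Finset.range (2*M+1), adv (V (k+1+(n'+1))) (cV (V (k+1))) x j) := by
    rw [Finset.range_eq_Ico,
      ← Finset.sum_Ico_consecutive _ (Nat.zero_le (n'+1)) (hnB :  n'+1 ≤ 2*M+1)]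
    have hpart1 : ∑ k ∈ Finset.Ico 0 (n'+1),
        adv (WV V ((k:ℤ)+1)) (WV V ((((n'+1):ℕ):ℤ) - ((k:ℤ)+1))) x j
        = (1/4 : ℂ) * (∑ k ∈ Finset.range n', adv (V (k+1)) (V (n'+1 - (k+1))) x j)
          + (1/2) * adv (V (n'+1)) (V 0) x j := by
      rw [← Finset.range_eq_Ico, Finset.sum_range_succ]
      rw [show (((n'+1):ℕ):ℤ) - ((n':ℤ)+1) = 0 by push_cast; ring]
      rw [WV_zero, show ((n':ℤ)+1) = (((n'+1):ℕ):ℤ) by push_cast; ring,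
        WV_coe V (n'+1) (by omega), adv_smul_left]
      congr 1
      rw [Finset.mul_sum]
      refine Finset.sum_congr rfl fun k hk => ?_
      simp only [Finset.mem_range] at hk
      rw [show ((k:ℤ)+1) = (((k+1):ℕ):ℤ) by push_cast; ring,
        show (((n'+1):ℕ):ℤ) - (((k+1):ℕ):ℤ) = (((n'+1 - (k+1)):ℕ):ℤ) by omega,
        WV_coe V (k+1) (by omega), WV_coe V (n'+1-(k+1)) (by omega),
        adv_smul_left, adv_smul_right]
      ring
    have hpart2 : ∑ k ∈ Finset.Ico (n'+1) (2*M+1),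
        adv (WV V ((k:ℤ)+1)) (WV V ((((n'+1):ℕ):ℤ) - ((k:ℤ)+1))) x j
        = (1/4 : ℂ) * (∑ k ∈ Finset.range (2*M+1),
            adv (V (k+1+(n'+1))) (cV (V (k+1))) x j) := by
      rw [Finset.sum_Ico_eq_sum_range]
      rw [Finset.mul_sum]
      rw [← Finset.sum_subset (Finset.range_subset_range.mpr
          (by omega : 2*M+1 - (n'+1) ≤ 2*M+1))
        (fun k _ hk => by
          simp only [Finset.mem_range, not_lt] at hk
          rw [adv_zero_left (fun i => hzV (k+1+(n'+1)) (by omega) x i) j, mul_zero])]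
      refine Finset.sum_congr rfl fun k hk => ?_
      simp only [Finset.mem_range] at hk
      rw [show ((n'+1+k : ℕ):ℤ)+1 = (((k+1+(n'+1)):ℕ):ℤ) by push_cast; ring,
        show (((n'+1):ℕ):ℤ) - ((((k+1+(n'+1)):ℕ)):ℤ) = -(((k+1):ℕ):ℤ) by push_cast; ring,
        WV_coe V (k+1+(n'+1)) (by omega), WV_negcoe V (k+1) (by omega),
        adv_smul_left, adv_smul_right]
      rw [show (fun y i => star (V (k+1) y i)) = cV (V (k+1)) from rfl]
      ring
    rw [hpart1, hpart2]
    simp only [← Finset.range_eq_Ico]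
  have hNegSum : ∑ k ∈ Finset.range (2*M+1),
      adv (WV V (-((k:ℤ)+1))) (WV V ((((n'+1):ℕ):ℤ) - -((k:ℤ)+1))) x j
      = (1/4 : ℂ) * (∑ k ∈ Finset.range (2*M+1),
          adv (cV (V (k+1))) (V (k+1+(n'+1))) x j) := by
    rw [Finset.mul_sum]
    refine Finset.sum_congr rfl fun k hk => ?_
    rw [show -((k:ℤ)+1) = -(((k+1):ℕ):ℤ) by push_cast; ring,
      show (((n'+1):ℕ):ℤ) - -(((k+1):ℕ):ℤ) = (((k+1+(n'+1)):ℕ):ℤ) by push_cast; ring,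
      WV_negcoe V (k+1) (by omega), WV_coe V (k+1+(n'+1)) (by omega),
      adv_smul_left, adv_smul_right]
    rw [show (fun y i => star (V (k+1) y i)) = cV (V (k+1)) from rfl]
    ring
  rw [hPosSum, hNegSum]
  ring

/-! ### identification of the convolution coefficients : momentum, zero mode -/

lemma conv_formula_zero {Ω : Set Pt} (hΩ : IsOpen Ω) (M : ℕ)
    (V : ℕ → Pt → Fin 2 → ℂ)
    (hzV : ∀ m, M < m → ∀ y j, V m y j = 0)
    (hre : ∀ y ∈ Ω, ∀ j : Fin 2, (V 0 y j).im = 0)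
    {x : Pt} (hx : x ∈ Ω) (j : Fin 2) :
    ∑ k ∈ Finset.Icc (-((2*M+1:ℕ):ℤ)) ((2*M+1:ℕ):ℤ), adv (WV V k) (WV V (-k)) x j
      = (1/2 : ℂ) * adv (V 0) (V 0) x j
        + (1/4) * ∑' m : ℕ, (adv (V m) (cV (V m)) x j + adv (cV (V m)) (V m) x j) := by
  have hstar0 : ∀ y ∈ Ω, ∀ i : Fin 2, star (V 0 y i) = V 0 y i :=
    fun y hy i => Complex.conj_eq_iff_im.mpr (hre y hy i)
  rw [tsum_eq_sum (s := Finset.range (M+1)) (fun m hm => by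
    simp only [Finset.mem_range, not_lt] at hm
    rw [adv_zero_left (fun i => hzV m (by omega) x i) j,
      adv_zero_right (fun y => hzV m (by omega) y j), add_zero])]
  rw [Finset.sum_range_succ'
    (fun m => adv (V m) (cV (V m)) x j + adv (cV (V m)) (V m) x j) M]
  rw [show adv (V 0) (cV (V 0)) x j = adv (V 0) (V 0) x j from
    adv_congr_right hΩ hx (fun y hy => hstar0 y hy j)]
  rw [show adv (cV (V 0)) (V 0) x j = adv (V 0) (V 0) x j from
    adv_congr_left (fun i => hstar0 x hx i)]
  rw [Finset.sum_add_distrib]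
  rw [Finset.sum_subset (Finset.range_subset_range.mpr (by omega : M ≤ 2*M+1))
    (fun m _ hm => by
      simp only [Finset.mem_range, not_lt] at hm
      exact adv_zero_left (fun i => hzV (m+1) (by omega) x i) j)]
  rw [Finset.sum_subset (Finset.range_subset_range.mpr (by omega : M ≤ 2*M+1))
    (fun m _ hm => by
      simp only [Finset.mem_range, not_lt] at hm
      exact adv_zero_right (fun y => hzV (m+1) (by omega) y j))]
  rw [sum_Icc_symm (2*M+1) (fun k => adv (WV V k) (WV V (-k)) x j)]
  simp only [neg_neg, neg_zero]
  rw [WV_zero]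
  rw [Finset.sum_add_distrib]
  have h1 : ∑ k ∈ Finset.range (2*M+1), adv (WV V ((k:ℤ)+1)) (WV V (-((k:ℤ)+1))) x j
      = (1/4 : ℂ) * ∑ k ∈ Finset.range (2*M+1), adv (V (k+1)) (cV (V (k+1))) x j := by
    rw [Finset.mul_sum]
    refine Finset.sum_congr rfl fun k _ => ?_
    rw [show ((k:ℤ)+1) = (((k+1):ℕ):ℤ) by push_cast; ring,
      show -(((k+1):ℕ):ℤ) = -((k+1:ℕ):ℤ) from rfl,
      WV_coe V (k+1) (by omega), WV_negcoe V (k+1) (by omega),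
      adv_smul_left, adv_smul_right]
    rw [show (fun y i => star (V (k+1) y i)) = cV (V (k+1)) from rfl]
    ring
  have h2 : ∑ k ∈ Finset.range (2*M+1), adv (WV V (-((k:ℤ)+1))) (WV V ((k:ℤ)+1)) x j
      = (1/4 : ℂ) * ∑ k ∈ Finset.range (2*M+1), adv (cV (V (k+1))) (V (k+1)) x j := by
    rw [Finset.mul_sum]
    refine Finset.sum_congr rfl fun k _ => ?_
    rw [show ((k:ℤ)+1) = (((k+1):ℕ):ℤ) by push_cast; ring,
      WV_negcoe V (k+1) (by omega), WV_coe V (k+1) (by omega),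
      adv_smul_left, adv_smul_right]
    rw [show (fun y i => star (V (k+1) y i)) = cV (V (k+1)) from rfl]
    ring
  rw [h1, h2]
  ring

/-! ### identification of the convolution coefficients : continuity -/

lemma div_formula_pos {Ω : Set Pt} (hΩ : IsOpen Ω) (M : ℕ)
    (V : ℕ → Pt → Fin 2 → ℂ) (P : ℕ → Pt → ℂ)
    (hVreg : ∀ k ≤ M, ContDiffOn ℝ 2 (V k) Ω)
    (hPreg : ∀ k ≤ M, ContDiffOn ℝ 1 (P k) Ω)
    (hzV : ∀ m, M < m → ∀ y j, V m y j = 0)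
    (hzP : ∀ m, M < m → ∀ y, P m y = 0)
    (hreV : ∀ y ∈ Ω, ∀ j : Fin 2, (V 0 y j).im = 0)
    (hreP : ∀ y ∈ Ω, (P 0 y).im = 0)
    {x : Pt} (hx : x ∈ Ω) (n : ℕ) (hn1 : 1 ≤ n) (hnB : n ≤ 2*M+1) :
    ∑ k ∈ Finset.Icc (-((2*M+1:ℕ):ℤ)) ((2*M+1:ℕ):ℤ),
        vdiv (fun y i => QP P k y * WV V ((n:ℤ) - k) y i) x
      = (1/2 : ℂ) * ((1/2) * ∑ m ∈ Finset.range (n+1),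
            vdiv (fun y i => P (n - m) y * V m y i) x
          + (1/2) * ∑' m : ℕ,
              vdiv (fun y i => V (m + n) y i * star (P m y)
                + star (V m y i) * P (m + n) y) x) := by
  obtain ⟨n', rfl⟩ : ∃ n'', n = n'' + 1 := ⟨n - 1, by omega⟩
  have hstarP0 : ∀ y ∈ Ω, star (P 0 y) = P 0 y :=
    fun y hy => Complex.conj_eq_iff_im.mpr (hreP y hy)
  have hstarV0 : ∀ y ∈ Ω, ∀ i : Fin 2, star (V 0 y i) = V 0 y i :=
    fun y hy i => Complex.conj_eq_iff_im.mpr (hreV y hy i)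
  have hdV : ∀ (i : Fin 2) (m : ℕ), DifferentiableAt ℝ (fun y => V m y i) x :=
    fun i m => (((fam_contDiffOn (fun m hm => contDiffOn_pi.mp (hVreg m hm) i)
      (fun m hm y => hzV m hm y i) m).of_le one_le_two).differentiableOn
        one_ne_zero).differentiableAt (hΩ.mem_nhds hx)
  have hdP : ∀ m : ℕ, DifferentiableAt ℝ (P m) x :=
    fun m => ((fam_contDiffOn hPreg hzP m).differentiableOn
      (by simp)).differentiableAt (hΩ.mem_nhds hx)
  -- evaluate and split the tsum
  rw [tsum_eq_sum (s := Finset.range (M+1)) (fun m hm => by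
    simp only [Finset.mem_range, not_lt] at hm
    exact vdiv_zero_fun (fun y i => by
      rw [hzV (m + (n'+1)) (by omega) y i, hzV m (by omega) y i, zero_mul, star_zero,
        zero_mul, add_zero]))]
  rw [Finset.sum_congr rfl (fun m _ => vdiv_add
    (fun i => (hdV i (m + (n'+1))).fun_mul (diffAt_star (hdP m)))
    (fun i => (diffAt_star (hdV i m)).fun_mul (hdP (m + (n'+1)))))]
  rw [Finset.sum_add_distrib]
  rw [Finset.sum_range_succ'
    (fun m => vdiv (fun y i => V (m + (n'+1)) y i * star (P m y)) x) M]
  rw [Finset.sum_range_succ'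
    (fun m => vdiv (fun y i => star (V m y i) * P (m + (n'+1)) y) x) M]
  simp only [zero_add]
  -- reality rewrites for the m = 0 terms
  rw [show vdiv (fun y i => V (n'+1) y i * star (P 0 y)) x
      = vdiv (fun y i => P 0 y * V (n'+1) y i) x from
    vdiv_congr_of_isOpen hΩ hx (fun y hy i => by rw [hstarP0 y hy]; ring)]
  rw [show vdiv (fun y i => star (V 0 y i) * P (n'+1) y) x
      = vdiv (fun y i => P (n'+1) y * V 0 y i) x from
    vdiv_congr_of_isOpen hΩ hx (fun y hy i => by rw [hstarV0 y hy i]; ring)]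
  -- pad the conjugate sums to `range (2*M+1)` and normalise their terms
  rw [Finset.sum_subset (Finset.range_subset_range.mpr (by omega : M ≤ 2*M+1))
    (fun m _ hm => by
      simp only [Finset.mem_range, not_lt] at hm
      exact vdiv_zero_fun (fun y i => by
        rw [hzV (m+1+(n'+1)) (by omega) y i, zero_mul]))]
  rw [Finset.sum_subset (Finset.range_subset_range.mpr (by omega : M ≤ 2*M+1))
    (fun m _ hm => by
      simp only [Finset.mem_range, not_lt] at hm
      exact vdiv_zero_fun (fun y i => by
        rw [hzV (m+1) (by omega) y i, star_zero, zero_mul]))]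
  rw [Finset.sum_congr rfl (fun m _ => show
      vdiv (fun y i => V (m+1+(n'+1)) y i * star (P (m+1) y)) x
        = vdiv (fun y i => star (P (m+1) y) * V (m+1+(n'+1)) y i) x from
    congrArg (fun F => vdiv F x) (funext fun y => funext fun i => mul_comm _ _))]
  -- reflect the quadratic sum
  have hreflect : ∑ m ∈ Finset.range (n'+1+1),
      vdiv (fun y i => P (n'+1 - m) y * V m y i) x
      = ∑ m ∈ Finset.range (n'+1+1), vdiv (fun y i => P m y * V (n'+1 - m) y i) x := by
    rw [← Finset.sum_range_reflect
      (fun m => vdiv (fun y i => P (n'+1 - m) y * V m y i) x) (n'+1+1)]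
    refine Finset.sum_congr rfl fun m hm => ?_
    simp only [Finset.mem_range] at hm
    rw [show n'+1+1-1-m = n'+1-m by omega, show n'+1-(n'+1-m) = m by omega]
  rw [hreflect]
  rw [Finset.sum_range_succ' (fun m => vdiv (fun y i => P m y * V (n'+1 - m) y i) x) (n'+1)]
  rw [Finset.sum_range_succ
    (fun m => vdiv (fun y i => P (m+1) y * V (n'+1 - (m+1)) y i) x) n']
  simp only [Nat.sub_zero, Nat.sub_self]
  -- expand the left-hand side
  rw [sum_Icc_symm (2*M+1)
    (fun k => vdiv (fun y i => QP P k y * WV V ((((n'+1):ℕ):ℤ) - k) y i) x)]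
  rw [sub_zero]
  rw [show (fun y i => QP P 0 y * WV V (((n'+1:ℕ)):ℤ) y i)
      = fun y i => (1/2 : ℂ) * (P 0 y * V (n'+1) y i) from funext fun y => funext fun i => by
    simp only [QP_zero, WV_coe V (n'+1) (by omega : (n'+1:ℕ) ≠ 0)]; ring]
  rw [vdiv_smul]
  rw [Finset.sum_add_distrib]
  have hPosSum : ∑ k ∈ Finset.range (2*M+1),
      vdiv (fun y i => QP P ((k:ℤ)+1) y * WV V ((((n'+1):ℕ):ℤ) - ((k:ℤ)+1)) y i) x
      = (1/4 : ℂ) * (∑ k ∈ Finset.range n',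
            vdiv (fun y i => P (k+1) y * V (n'+1 - (k+1)) y i) x)
        + (1/2) * vdiv (fun y i => P (n'+1) y * V 0 y i) x
        + (1/4) * (∑ k ∈ Finset.range (2*M+1),
            vdiv (fun y i => star (V (k+1) y i) * P (k+1+(n'+1)) y) x) := by
    rw [Finset.range_eq_Ico,
      ← Finset.sum_Ico_consecutive _ (Nat.zero_le (n'+1)) (hnB : n'+1 ≤ 2*M+1)]
    have hpart1 : ∑ k ∈ Finset.Ico 0 (n'+1),
        vdiv (fun y i => QP P ((k:ℤ)+1) y * WV V ((((n'+1):ℕ):ℤ) - ((k:ℤ)+1)) y i) x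
        = (1/4 : ℂ) * (∑ k ∈ Finset.range n',
              vdiv (fun y i => P (k+1) y * V (n'+1 - (k+1)) y i) x)
          + (1/2) * vdiv (fun y i => P (n'+1) y * V 0 y i) x := by
      rw [← Finset.range_eq_Ico, Finset.sum_range_succ]
      rw [show (fun y i => QP P ((n':ℤ)+1) y * WV V ((((n'+1):ℕ):ℤ) - ((n':ℤ)+1)) y i)
          = fun y i => (1/2 : ℂ) * (P (n'+1) y * V 0 y i) from
        funext fun y => funext fun i => by
          rw [show (((n'+1):ℕ):ℤ) - ((n':ℤ)+1) = 0 by push_cast; ring,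
            show ((n':ℤ)+1) = (((n'+1):ℕ):ℤ) by push_cast; ring]
          simp only [WV_zero, QP_coe P (n'+1) (by omega : (n'+1:ℕ) ≠ 0)]; ring]
      rw [vdiv_smul]
      congr 1
      rw [Finset.mul_sum]
      refine Finset.sum_congr rfl fun k hk => ?_
      simp only [Finset.mem_range] at hk
      rw [show (fun y i => QP P ((k:ℤ)+1) y * WV V ((((n'+1):ℕ):ℤ) - ((k:ℤ)+1)) y i)
          = fun y i => (1/4 : ℂ) * (P (k+1) y * V (n'+1 - (k+1)) y i) from
        funext fun y => funext fun i => by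
          rw [show ((k:ℤ)+1) = (((k+1):ℕ):ℤ) by push_cast; ring,
            show (((n'+1):ℕ):ℤ) - (((k+1):ℕ):ℤ) = (((n'+1 - (k+1)):ℕ):ℤ) by omega]
          simp only [QP_coe P (k+1) (by omega : (k+1:ℕ) ≠ 0),
            WV_coe V (n'+1-(k+1)) (by omega : (n'+1-(k+1):ℕ) ≠ 0)]
          ring]
      rw [vdiv_smul]
    have hpart2 : ∑ k ∈ Finset.Ico (n'+1) (2*M+1),
        vdiv (fun y i => QP P ((k:ℤ)+1) y * WV V ((((n'+1):ℕ):ℤ) - ((k:ℤ)+1)) y i) x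
        = (1/4 : ℂ) * (∑ k ∈ Finset.range (2*M+1),
            vdiv (fun y i => star (V (k+1) y i) * P (k+1+(n'+1)) y) x) := by
      rw [Finset.sum_Ico_eq_sum_range]
      rw [Finset.mul_sum]
      rw [← Finset.sum_subset (Finset.range_subset_range.mpr
          (by omega : 2*M+1 - (n'+1) ≤ 2*M+1))
        (fun k _ hk => by
          simp only [Finset.mem_range, not_lt] at hk
          rw [vdiv_zero_fun (fun y i => by
            rw [hzP (k+1+(n'+1)) (by omega) y, mul_zero]), mul_zero])]
      refine Finset.sum_congr rfl fun k hk => ?_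
      simp only [Finset.mem_range] at hk
      rw [show (fun y i => QP P (((n'+1+k:ℕ):ℤ)+1) y
            * WV V ((((n'+1):ℕ):ℤ) - (((n'+1+k:ℕ):ℤ)+1)) y i)
          = fun y i => (1/4 : ℂ) * (star (V (k+1) y i) * P (k+1+(n'+1)) y) from
        funext fun y => funext fun i => by
          rw [show ((n'+1+k:ℕ):ℤ)+1 = (((k+1+(n'+1)):ℕ):ℤ) by push_cast; ring,
            show (((n'+1):ℕ):ℤ) - (((k+1+(n'+1)):ℕ):ℤ) = -(((k+1):ℕ):ℤ) by push_cast; ring]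
          simp only [QP_coe P (k+1+(n'+1)) (by omega : (k+1+(n'+1):ℕ) ≠ 0),
            WV_negcoe V (k+1) (by omega : (k+1:ℕ) ≠ 0)]
          ring]
      rw [vdiv_smul]
    rw [hpart1, hpart2]
    simp only [← Finset.range_eq_Ico]
  have hNegSum : ∑ k ∈ Finset.range (2*M+1),
      vdiv (fun y i => QP P (-((k:ℤ)+1)) y * WV V ((((n'+1):ℕ):ℤ) - -((k:ℤ)+1)) y i) x
      = (1/4 : ℂ) * (∑ k ∈ Finset.range (2*M+1),
          vdiv (fun y i => star (P (k+1) y) * V (k+1+(n'+1)) y i) x) := by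
    rw [Finset.mul_sum]
    refine Finset.sum_congr rfl fun k _ => ?_
    rw [show (fun y i => QP P (-((k:ℤ)+1)) y * WV V ((((n'+1):ℕ):ℤ) - -((k:ℤ)+1)) y i)
        = fun y i => (1/4 : ℂ) * (star (P (k+1) y) * V (k+1+(n'+1)) y i) from
      funext fun y => funext fun i => by
        rw [show -((k:ℤ)+1) = -(((k+1):ℕ):ℤ) by push_cast; ring,
          show (((n'+1):ℕ):ℤ) - -(((k+1):ℕ):ℤ) = (((k+1+(n'+1)):ℕ):ℤ) by push_cast; ring]
        simp only [QP_negcoe P (k+1) (by omega : (k+1:ℕ) ≠ 0),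
          WV_coe V (k+1+(n'+1)) (by omega : (k+1+(n'+1):ℕ) ≠ 0)]
        ring
    ]
    rw [vdiv_smul]
  rw [hPosSum, hNegSum]
  ring

lemma div_formula_zero {Ω : Set Pt} (hΩ : IsOpen Ω) (M : ℕ)
    (V : ℕ → Pt → Fin 2 → ℂ) (P : ℕ → Pt → ℂ)
    (hVreg : ∀ k ≤ M, ContDiffOn ℝ 2 (V k) Ω)
    (hPreg : ∀ k ≤ M, ContDiffOn ℝ 1 (P k) Ω)
    (hzV : ∀ m, M < m → ∀ y j, V m y j = 0)
    (hzP : ∀ m, M < m → ∀ y, P m y = 0)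
    (hreV : ∀ y ∈ Ω, ∀ j : Fin 2, (V 0 y j).im = 0)
    (hreP : ∀ y ∈ Ω, (P 0 y).im = 0)
    {x : Pt} (hx : x ∈ Ω) :
    ∑ k ∈ Finset.Icc (-((2*M+1:ℕ):ℤ)) ((2*M+1:ℕ):ℤ),
        vdiv (fun y i => QP P k y * WV V (-k) y i) x
      = (1/2 : ℂ) * vdiv (fun y i => P 0 y * V 0 y i) x
        + (1/4) * ∑' m : ℕ,
            vdiv (fun y i => V m y i * star (P m y) + star (V m y i) * P m y) x := by
  have hstarP0 : ∀ y ∈ Ω, star (P 0 y) = P 0 y :=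
    fun y hy => Complex.conj_eq_iff_im.mpr (hreP y hy)
  have hstarV0 : ∀ y ∈ Ω, ∀ i : Fin 2, star (V 0 y i) = V 0 y i :=
    fun y hy i => Complex.conj_eq_iff_im.mpr (hreV y hy i)
  have hdV : ∀ (i : Fin 2) (m : ℕ), DifferentiableAt ℝ (fun y => V m y i) x :=
    fun i m => (((fam_contDiffOn (fun m hm => contDiffOn_pi.mp (hVreg m hm) i)
      (fun m hm y => hzV m hm y i) m).of_le one_le_two).differentiableOn
        one_ne_zero).differentiableAt (hΩ.mem_nhds hx)
  have hdP : ∀ m : ℕ, DifferentiableAt ℝ (P m) x :=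
    fun m => ((fam_contDiffOn hPreg hzP m).differentiableOn
      (by simp)).differentiableAt (hΩ.mem_nhds hx)
  rw [tsum_eq_sum (s := Finset.range (M+1)) (fun m hm => by
    simp only [Finset.mem_range, not_lt] at hm
    exact vdiv_zero_fun (fun y i => by
      rw [hzV m (by omega) y i, zero_mul, star_zero, zero_mul, add_zero]))]
  rw [Finset.sum_congr rfl (fun m _ => vdiv_add
    (fun i => (hdV i m).fun_mul (diffAt_star (hdP m)))
    (fun i => (diffAt_star (hdV i m)).fun_mul (hdP m)))]
  rw [Finset.sum_add_distrib]
  rw [Finset.sum_range_succ' (fun m => vdiv (fun y i => V m y i * star (P m y)) x) M]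
  rw [Finset.sum_range_succ' (fun m => vdiv (fun y i => star (V m y i) * P m y) x) M]
  rw [show vdiv (fun y i => V 0 y i * star (P 0 y)) x
      = vdiv (fun y i => P 0 y * V 0 y i) x from
    vdiv_congr_of_isOpen hΩ hx (fun y hy i => by rw [hstarP0 y hy]; ring)]
  rw [show vdiv (fun y i => star (V 0 y i) * P 0 y) x
      = vdiv (fun y i => P 0 y * V 0 y i) x from
    vdiv_congr_of_isOpen hΩ hx (fun y hy i => by rw [hstarV0 y hy i]; ring)]
  rw [Finset.sum_subset (Finset.range_subset_range.mpr (by omega : M ≤ 2*M+1))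
    (fun m _ hm => by
      simp only [Finset.mem_range, not_lt] at hm
      exact vdiv_zero_fun (fun y i => by
        rw [hzV (m+1) (by omega) y i, zero_mul]))]
  rw [Finset.sum_subset (Finset.range_subset_range.mpr (by omega : M ≤ 2*M+1))
    (fun m _ hm => by
      simp only [Finset.mem_range, not_lt] at hm
      exact vdiv_zero_fun (fun y i => by
        rw [hzV (m+1) (by omega) y i, star_zero, zero_mul]))]
  rw [Finset.sum_congr rfl (fun m _ => show
      vdiv (fun y i => V (m+1) y i * star (P (m+1) y)) x
        = vdiv (fun y i => star (P (m+1) y) * V (m+1) y i) x from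
    congrArg (fun F => vdiv F x) (funext fun y => funext fun i => mul_comm _ _))]
  rw [sum_Icc_symm (2*M+1) (fun k => vdiv (fun y i => QP P k y * WV V (-k) y i) x)]
  simp only [neg_neg, neg_zero]
  rw [show (fun y i => QP P 0 y * WV V 0 y i)
      = fun y i => P 0 y * V 0 y i from rfl]
  rw [Finset.sum_add_distrib]
  have h1 : ∑ k ∈ Finset.range (2*M+1),
      vdiv (fun y i => QP P ((k:ℤ)+1) y * WV V (-((k:ℤ)+1)) y i) x
      = (1/4 : ℂ) * ∑ k ∈ Finset.range (2*M+1),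
          vdiv (fun y i => star (V (k+1) y i) * P (k+1) y) x := by
    rw [Finset.mul_sum]
    refine Finset.sum_congr rfl fun k _ => ?_
    rw [show (fun y i => QP P ((k:ℤ)+1) y * WV V (-((k:ℤ)+1)) y i)
        = fun y i => (1/4 : ℂ) * (star (V (k+1) y i) * P (k+1) y) from
      funext fun y => funext fun i => by
        rw [show ((k:ℤ)+1) = (((k+1):ℕ):ℤ) by push_cast; ring]
        simp only [QP_coe P (k+1) (by omega : (k+1:ℕ) ≠ 0),
          WV_negcoe V (k+1) (by omega : (k+1:ℕ) ≠ 0)]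
        ring]
    rw [vdiv_smul]
  have h2 : ∑ k ∈ Finset.range (2*M+1),
      vdiv (fun y i => QP P (-((k:ℤ)+1)) y * WV V ((k:ℤ)+1) y i) x
      = (1/4 : ℂ) * ∑ k ∈ Finset.range (2*M+1),
          vdiv (fun y i => star (P (k+1) y) * V (k+1) y i) x := by
    rw [Finset.mul_sum]
    refine Finset.sum_congr rfl fun k _ => ?_
    rw [show (fun y i => QP P (-((k:ℤ)+1)) y * WV V ((k:ℤ)+1) y i)
        = fun y i => (1/4 : ℂ) * (star (P (k+1) y) * V (k+1) y i) from
      funext fun y => funext fun i => by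
        rw [show ((k:ℤ)+1) = (((k+1):ℕ):ℤ) by push_cast; ring]
        simp only [QP_negcoe P (k+1) (by omega : (k+1:ℕ) ≠ 0),
          WV_coe V (k+1) (by omega : (k+1:ℕ) ≠ 0)]
        ring]
    rw [vdiv_smul]
  rw [h1, h2]
  ring

/-! ### the coefficients versus the frequency-domain operators -/

lemma cmom_zero_eq {Ω : Set Pt} (hΩ : IsOpen Ω) (ω ν : ℝ) (M : ℕ)
    (V : ℕ → Pt → Fin 2 → ℂ) (P : ℕ → Pt → ℂ) (f : Pt → Fin 2 → ℂ)
    (hzV : ∀ m, M < m → ∀ y j, V m y j = 0)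
    (hre : ∀ y ∈ Ω, ∀ j : Fin 2, (V 0 y j).im = 0)
    {x : Pt} (hx : x ∈ Ω) (j : Fin 2) :
    cmom ω ν M V P f x j 0 = Lmom ω ν 0 V P x j + Nmom 0 V x j := by
  unfold cmom
  rw [Finset.sum_congr rfl (fun k _ => by rw [zero_sub] :
    ∀ k ∈ Finset.Icc (-((2*M+1:ℕ):ℤ)) ((2*M+1:ℕ):ℤ),
      adv (WV V k) (WV V ((0:ℤ) - k)) x j = adv (WV V k) (WV V (-k)) x j)]
  rw [conv_formula_zero hΩ M V hzV hre hx j]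
  rw [show WV V 0 x j = V 0 x j from rfl,
    show (fun y => WV V 0 y j) = (fun y => V 0 y j) from rfl,
    show QP P 0 = P 0 from rfl]
  rw [Lmom, Nmom, if_pos rfl, rterm, if_neg (by norm_num), if_neg (by norm_num)]
  push_cast
  ring

lemma cmom_pos_eq {Ω : Set Pt} (hΩ : IsOpen Ω) (ω ν : ℝ) (M : ℕ)
    (V : ℕ → Pt → Fin 2 → ℂ) (P : ℕ → Pt → ℂ) (f : Pt → Fin 2 → ℂ)
    (hzV : ∀ m, M < m → ∀ y j, V m y j = 0)
    (hre : ∀ y ∈ Ω, ∀ j : Fin 2, (V 0 y j).im = 0)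
    {x : Pt} (hx : x ∈ Ω) (n : ℕ) (hn1 : 1 ≤ n) (hnB : n ≤ 2*M+1) (j : Fin 2) :
    cmom ω ν M V P f x j (n:ℤ)
      = (1/2 : ℂ) * (Lmom ω ν n V P x j + Nmom n V x j
          - (if n = 1 then f x j else 0)) := by
  have hn0 : n ≠ 0 := by omega
  have hrt : rterm f x j (n:ℤ) = (1/2 : ℂ) * (if n = 1 then f x j else 0) := by
    by_cases hn : n = 1
    · subst hn; rw [rterm, if_pos (by norm_num : ((1:ℕ):ℤ) = 1), if_pos rfl]
    · rw [rterm, if_neg (by exact_mod_cast hn), if_neg (by omega), if_neg hn, mul_zero]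
  unfold cmom
  rw [conv_formula_pos hΩ M V hzV hre hx n hn1 hnB j]
  rw [show WV V (n:ℤ) x j = (1/2 : ℂ) * V n x j from by rw [WV_apply, Ssp_coe _ n hn0]]
  rw [show (fun y => WV V (n:ℤ) y j) = (fun y => (1/2 : ℂ) * V n y j) from
    funext fun y => by rw [WV_apply, Ssp_coe _ n hn0]]
  rw [lap_const_mul]
  rw [show QP P (n:ℤ) = fun y => (1/2 : ℂ) * P n y from QP_coe P n hn0]
  rw [pd_const_mul]
  rw [hrt, Lmom, Nmom, if_neg hn0]
  push_cast
  ring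

lemma ccon_zero_eq {Ω : Set Pt} (hΩ : IsOpen Ω) (ω c : ℝ) (M : ℕ)
    (V : ℕ → Pt → Fin 2 → ℂ) (P : ℕ → Pt → ℂ)
    (hVreg : ∀ k ≤ M, ContDiffOn ℝ 2 (V k) Ω)
    (hPreg : ∀ k ≤ M, ContDiffOn ℝ 1 (P k) Ω)
    (hzV : ∀ m, M < m → ∀ y j, V m y j = 0)
    (hzP : ∀ m, M < m → ∀ y, P m y = 0)
    (hreV : ∀ y ∈ Ω, ∀ j : Fin 2, (V 0 y j).im = 0)
    (hreP : ∀ y ∈ Ω, (P 0 y).im = 0)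
    {x : Pt} (hx : x ∈ Ω) :
    ccon ω c M V P x 0 = Lcont ω c 0 V P x + Ncont 0 V P x := by
  unfold ccon
  rw [Finset.sum_congr rfl (fun k _ => by rw [zero_sub] :
    ∀ k ∈ Finset.Icc (-((2*M+1:ℕ):ℤ)) ((2*M+1:ℕ):ℤ),
      vdiv (fun y i => QP P k y * WV V ((0:ℤ) - k) y i) x
        = vdiv (fun y i => QP P k y * WV V (-k) y i) x)]
  rw [div_formula_zero hΩ M V P hVreg hPreg hzV hzP hreV hreP hx]
  rw [show QP P 0 x = P 0 x from rfl, show WV V 0 = V 0 from rfl]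
  rw [Lcont, Ncont, if_pos rfl]
  push_cast
  ring

lemma ccon_pos_eq {Ω : Set Pt} (hΩ : IsOpen Ω) (ω c : ℝ) (M : ℕ)
    (V : ℕ → Pt → Fin 2 → ℂ) (P : ℕ → Pt → ℂ)
    (hVreg : ∀ k ≤ M, ContDiffOn ℝ 2 (V k) Ω)
    (hPreg : ∀ k ≤ M, ContDiffOn ℝ 1 (P k) Ω)
    (hzV : ∀ m, M < m → ∀ y j, V m y j = 0)
    (hzP : ∀ m, M < m → ∀ y, P m y = 0)
    (hreV : ∀ y ∈ Ω, ∀ j : Fin 2, (V 0 y j).im = 0)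
    (hreP : ∀ y ∈ Ω, (P 0 y).im = 0)
    {x : Pt} (hx : x ∈ Ω) (n : ℕ) (hn1 : 1 ≤ n) (hnB : n ≤ 2*M+1) :
    ccon ω c M V P x (n:ℤ)
      = (1/2 : ℂ) * (Lcont ω c n V P x + Ncont n V P x) := by
  have hn0 : n ≠ 0 := by omega
  unfold ccon
  rw [div_formula_pos hΩ M V P hVreg hPreg hzV hzP hreV hreP hx n hn1 hnB]
  rw [show QP P (n:ℤ) x = (1/2 : ℂ) * P n x from by
    rw [show QP P (n:ℤ) = fun y => (1/2 : ℂ) * P n y from QP_coe P n hn0]]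
  rw [show WV V (n:ℤ) = fun y i => (1/2 : ℂ) * V n y i from WV_coe V n hn0]
  rw [vdiv_smul]
  rw [Lcont, Ncont, if_neg hn0]
  push_cast
  ring

/-! ### trivial frequency-domain equations for large k -/

lemma FD_mom_trivial (ω ν : ℝ) (M : ℕ)
    (V : ℕ → Pt → Fin 2 → ℂ) (P : ℕ → Pt → ℂ)
    (hzV : ∀ m, M < m → ∀ y j, V m y j = 0)
    (hzP : ∀ m, M < m → ∀ y, P m y = 0)
    (n : ℕ) (hn : 2*M < n) (x : Pt) (j : Fin 2) :
    Lmom ω ν n V P x j + Nmom n V x j = 0 := by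
  have hn0 : n ≠ 0 := by omega
  rw [Lmom, Nmom, if_neg hn0]
  rw [hzV n (by omega) x j,
    lap_of_zero_fun (fun y => hzV n (by omega) y j) x,
    pd_of_zero_fun (fun y => hzP n (by omega) y) j x]
  rw [Finset.sum_eq_zero (fun m hm => by
    simp only [Finset.mem_range] at hm
    by_cases hmM : m ≤ M
    · exact adv_zero_right (fun y => hzV (n - m) (by omega) y j)
    · exact adv_zero_left (fun i => hzV m (by omega) x i) j)]
  rw [tsum_congr (fun m => by
    rw [adv_zero_left (fun i => hzV (m+n) (by omega) x i) j,
      adv_zero_right (fun y => hzV (m+n) (by omega) y j), add_zero] :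
    ∀ m : ℕ, (adv (V (m + n)) (cV (V m)) x j + adv (cV (V m)) (V (m + n)) x j) = 0)]
  rw [tsum_zero]
  ring

lemma FD_con_trivial (ω c : ℝ) (M : ℕ)
    (V : ℕ → Pt → Fin 2 → ℂ) (P : ℕ → Pt → ℂ)
    (hzV : ∀ m, M < m → ∀ y j, V m y j = 0)
    (hzP : ∀ m, M < m → ∀ y, P m y = 0)
    (n : ℕ) (hn : 2*M < n) (x : Pt) :
    Lcont ω c n V P x + Ncont n V P x = 0 := by
  have hn0 : n ≠ 0 := by omega
  rw [Lcont, Ncont, if_neg hn0]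
  rw [hzP n (by omega) x, vdiv_zero_fun (fun y i => hzV n (by omega) y i)]
  rw [Finset.sum_eq_zero (fun m hm => by
    simp only [Finset.mem_range] at hm
    by_cases hmM : m ≤ M
    · exact vdiv_zero_fun (fun y i => by rw [hzP (n - m) (by omega) y, zero_mul])
    · exact vdiv_zero_fun (fun y i => by rw [hzV m (by omega) y i, mul_zero]))]
  rw [tsum_congr (fun m => vdiv_zero_fun (fun y i => by
      rw [hzV (m+n) (by omega) y i, zero_mul, hzP (m+n) (by omega) y,
        mul_zero, add_zero]) :
    ∀ m : ℕ, vdiv (fun y i => V (m + n) y i * star (P m y)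
      + star (V m y i) * P (m + n) y) x = 0)]
  rw [tsum_zero]
  ring

/-! ### conjugation symmetry of the coefficients -/

lemma star_coef (ω : ℝ) (n : ℤ) :
    star (-(Complex.I * (n:ℂ) * (ω:ℂ))) = -(Complex.I * ((-n : ℤ):ℂ) * (ω:ℂ)) := by
  rw [show (star (-(Complex.I * (n:ℂ) * (ω:ℂ))))
    = (starRingEnd ℂ) (-(Complex.I * (n:ℂ) * (ω:ℂ))) from rfl]
  simp only [map_neg, map_mul, Complex.conj_I, map_intCast, Complex.conj_ofReal]
  push_cast
  ring

lemma rterm_neg (f : Pt → Fin 2 → ℂ) (x : Pt) (j : Fin 2) (n : ℕ) :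
    rterm f x j (-(n:ℤ)) = star (rterm f x j (n:ℤ)) := by
  match n with
  | 0 => simp [rterm]
  | 1 =>
    rw [rterm, rterm, if_neg (by omega), if_pos (by norm_num),
      if_pos (by norm_num), star_half_mul]
  | (n+2) =>
    rw [rterm, rterm, if_neg (by omega), if_neg (by omega), if_neg (by omega),
      if_neg (by omega), star_zero]

lemma cmom_neg_eq {Ω : Set Pt} (hΩ : IsOpen Ω) (ω ν : ℝ) (M : ℕ)
    (V : ℕ → Pt → Fin 2 → ℂ) (P : ℕ → Pt → ℂ) (f : Pt → Fin 2 → ℂ)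
    (hreV : ∀ y ∈ Ω, ∀ j : Fin 2, (V 0 y j).im = 0)
    (hreP : ∀ y ∈ Ω, (P 0 y).im = 0)
    {x : Pt} (hx : x ∈ Ω) (j : Fin 2) (n : ℕ) :
    cmom ω ν M V P f x j (-(n:ℤ)) = star (cmom ω ν M V P f x j (n:ℤ)) := by
  have h0 : ∀ i : Fin 2, ∀ y ∈ Ω,
      star ((fun m z => V m z i) 0 y) = (fun m z => V m z i) 0 y :=
    fun i y hy => Complex.conj_eq_iff_im.mpr (hreV y hy i)
  have h0P : ∀ y ∈ Ω, star (P 0 y) = P 0 y :=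
    fun y hy => Complex.conj_eq_iff_im.mpr (hreP y hy)
  have e1 : -(Complex.I * ((-(n:ℤ) : ℤ):ℂ) * ω) * WV V (-(n:ℤ)) x j
      = star (-(Complex.I * ((n:ℤ):ℂ) * ω) * WV V (n:ℤ) x j) := by
    rw [star_mul', star_coef ω (n:ℤ), WV_apply, WV_apply, Ssp_neg_val (h0 j x hx) (n:ℤ)]
  have e2 : (ν:ℂ) * lap (fun y => WV V (-(n:ℤ)) y j) x
      = star ((ν:ℂ) * lap (fun y => WV V (n:ℤ) y j) x) := by
    rw [star_mul', show (star ((ν:ℝ):ℂ)) = ((ν:ℝ):ℂ) from Complex.conj_ofReal ν]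
    congr 1
    exact lap_Ssp_neg hΩ (h0 j) hx (n:ℤ)
  have e3 : pd j (QP P (-(n:ℤ))) x = star (pd j (QP P (n:ℤ)) x) :=
    pd_Ssp_neg hΩ h0P hx (n:ℤ) j
  have hterm : ∀ k : ℤ, adv (WV V k) (WV V ((-(n:ℤ)) - k)) x j
      = star (adv (WV V (-k)) (WV V ((n:ℤ) + k)) x j) := by
    intro k
    rw [adv_WV, adv_WV, star_sum]
    refine Finset.sum_congr rfl fun i _ => ?_
    rw [star_mul']
    congr 1
    · rw [← Ssp_neg_val (h0 i x hx) (-k), neg_neg]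
    · rw [show (-(n:ℤ)) - k = -((n:ℤ) + k) by ring]
      exact pd_Ssp_neg hΩ (h0 j) hx ((n:ℤ)+k) i
  have e4 : ∑ k ∈ Finset.Icc (-((2*M+1:ℕ):ℤ)) ((2*M+1:ℕ):ℤ),
        adv (WV V k) (WV V ((-(n:ℤ)) - k)) x j
      = star (∑ k ∈ Finset.Icc (-((2*M+1:ℕ):ℤ)) ((2*M+1:ℕ):ℤ),
          adv (WV V k) (WV V ((n:ℤ) - k)) x j) := by
    rw [star_sum]
    rw [Finset.sum_congr rfl (fun k _ => hterm k)]
    refine Finset.sum_equiv (Equiv.neg ℤ) (fun k => ?_) (fun k hk => ?_)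
    · simp only [Finset.mem_Icc, Equiv.neg_apply]
      omega
    · simp only [Equiv.neg_apply, neg_neg]
      rw [sub_neg_eq_add]
  have e5 := rterm_neg f x j n
  show _ - _ + _ + _ - _ = _
  rw [e1, e2, e3, e4, e5, ← star_sub, ← star_add, ← star_add, ← star_sub]
  rfl

lemma ccon_neg_eq {Ω : Set Pt} (hΩ : IsOpen Ω) (ω c : ℝ) (M : ℕ)
    (V : ℕ → Pt → Fin 2 → ℂ) (P : ℕ → Pt → ℂ)
    (hreV : ∀ y ∈ Ω, ∀ j : Fin 2, (V 0 y j).im = 0)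
    (hreP : ∀ y ∈ Ω, (P 0 y).im = 0)
    {x : Pt} (hx : x ∈ Ω) (n : ℕ) :
    ccon ω c M V P x (-(n:ℤ)) = star (ccon ω c M V P x (n:ℤ)) := by
  have h0 : ∀ i : Fin 2, ∀ y ∈ Ω,
      star ((fun m z => V m z i) 0 y) = (fun m z => V m z i) 0 y :=
    fun i y hy => Complex.conj_eq_iff_im.mpr (hreV y hy i)
  have h0P : ∀ y ∈ Ω, star (P 0 y) = P 0 y :=
    fun y hy => Complex.conj_eq_iff_im.mpr (hreP y hy)
  have e1 : -(Complex.I * ((-(n:ℤ) : ℤ):ℂ) * ω) * QP P (-(n:ℤ)) x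
      = star (-(Complex.I * ((n:ℤ):ℂ) * ω) * QP P (n:ℤ) x) := by
    rw [star_mul', star_coef ω (n:ℤ)]
    congr 1
    exact (Ssp_neg_val (h0P x hx) (n:ℤ))
  have e2 : (c:ℂ)^2 * vdiv (WV V (-(n:ℤ))) x
      = star ((c:ℂ)^2 * vdiv (WV V (n:ℤ)) x) := by
    rw [star_mul']
    congr 1
    · rw [show (star (((c:ℝ):ℂ)^2)) = ((starRingEnd ℂ) ((c:ℝ):ℂ))^2 from by
        rw [← map_pow]; rfl]
      rw [Complex.conj_ofReal]
    · rw [vdiv_WV, vdiv_WV, star_sum]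
      exact Finset.sum_congr rfl fun i _ => pd_Ssp_neg hΩ (h0 i) hx (n:ℤ) i
  have hterm : ∀ k : ℤ, vdiv (fun y i => QP P k y * WV V ((-(n:ℤ)) - k) y i) x
      = star (vdiv (fun y i => QP P (-k) y * WV V ((n:ℤ) + k) y i) x) := by
    intro k
    rw [vdiv_QW, vdiv_QW, star_sum]
    refine Finset.sum_congr rfl fun i _ => ?_
    rw [← pd_star]
    refine pd_congr_of_isOpen hΩ hx (fun y hy => ?_) i
    rw [star_mul']
    congr 1
    · rw [← Ssp_neg_val (h0P y hy) (-k), neg_neg]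
    · rw [show (-(n:ℤ)) - k = -((n:ℤ) + k) by ring]
      exact Ssp_neg_val (h0 i y hy) ((n:ℤ)+k)
  have e3 : ∑ k ∈ Finset.Icc (-((2*M+1:ℕ):ℤ)) ((2*M+1:ℕ):ℤ),
        vdiv (fun y i => QP P k y * WV V ((-(n:ℤ)) - k) y i) x
      = star (∑ k ∈ Finset.Icc (-((2*M+1:ℕ):ℤ)) ((2*M+1:ℕ):ℤ),
          vdiv (fun y i => QP P k y * WV V ((n:ℤ) - k) y i) x) := by
    rw [star_sum]
    rw [Finset.sum_congr rfl (fun k _ => hterm k)]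
    refine Finset.sum_equiv (Equiv.neg ℤ) (fun k => ?_) (fun k hk => ?_)
    · simp only [Finset.mem_Icc, Equiv.neg_apply]
      omega
    · simp only [Equiv.neg_apply, neg_neg]
      rw [sub_neg_eq_add]
  show _ + _ + _ = _
  rw [e1, e2, e3, ← star_add, ← star_add]
  rfl
/-- for finitely many modes (`v_k = 0`, `p_k = 0` for `k > M`), the finite
multiharmonic ansatz `(v,p)` solves the nonlinear acoustic system in time domain on
`ℝ × Ω` if and only if the coefficients solve the frequency-domain system
`𝓛_k(V,P) + 𝓝_k(V,P) = (f,0) δ_{k=1}` for every `k ≥ 0` on `Ω`. -/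
theorem stmt_2 (Ω : Set Pt) (hΩ : IsOpen Ω) (ω c ν : ℝ)
    (hω : 0 < ω) (hc : 0 < c) (hν : 0 < ν) (M : ℕ)
    (V : ℕ → Pt → Fin 2 → ℂ) (P : ℕ → Pt → ℂ) (f : Pt → Fin 2 → ℂ)
    (hVreg : ∀ k ≤ M, ContDiffOn ℝ 2 (V k) Ω)
    (hPreg : ∀ k ≤ M, ContDiffOn ℝ 1 (P k) Ω)
    (hV0real : ∀ x ∈ Ω, ∀ j : Fin 2, (V 0 x j).im = 0)
    (hP0real : ∀ x ∈ Ω, (P 0 x).im = 0)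
    (hzero : ∀ k : ℕ, M < k → (∀ x : Pt, ∀ j : Fin 2, V k x j = 0) ∧ ∀ x : Pt, P k x = 0)
    (v : ℝ → Pt → Fin 2 → ℂ) (p : ℝ → Pt → ℂ)
    (hv : ∀ t : ℝ, ∀ x : Pt, ∀ j : Fin 2,
      v t x j = V 0 x j + (1 / 2) * ∑ k ∈ Finset.range M,
        (V (k + 1) x j * Complex.exp (-(Complex.I * ((k : ℂ) + 1) * ω * t))
          + star (V (k + 1) x j) * Complex.exp (Complex.I * ((k : ℂ) + 1) * ω * t)))
    (hp : ∀ t : ℝ, ∀ x : Pt,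
      p t x = P 0 x + (1 / 2) * ∑ k ∈ Finset.range M,
        (P (k + 1) x * Complex.exp (-(Complex.I * ((k : ℂ) + 1) * ω * t))
          + star (P (k + 1) x) * Complex.exp (Complex.I * ((k : ℂ) + 1) * ω * t))) :
    ((∀ t : ℝ, ∀ x ∈ Ω,
        (∀ j : Fin 2,
          deriv (fun s => v s x j) t + adv (v t) (v t) x j + pd j (p t) x
              - ν * lap (fun y => v t y j) x
            = (((f x j * Complex.exp (-(Complex.I * ω * t))).re : ℝ) : ℂ))
        ∧ deriv (fun s => p s x) t + c ^ 2 * vdiv (v t) x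
            + vdiv (fun y i => p t y * v t y i) x = 0)
      ↔ (∀ k : ℕ, ∀ x ∈ Ω,
          (∀ j : Fin 2,
            Lmom ω ν k V P x j + Nmom k V x j = if k = 1 then f x j else 0)
          ∧ Lcont ω c k V P x + Ncont k V P x = 0)) := by
  have hωne : ω ≠ 0 := ne_of_gt hω
  have hzV : ∀ m, M < m → ∀ y (j : Fin 2), V m y j = 0 := fun m hm y j => (hzero m hm).1 y j
  have hzP : ∀ m, M < m → ∀ y, P m y = 0 := fun m hm y => (hzero m hm).2 y
  constructor
  · intro hTD k x hx
    by_cases hk : k ≤ 2*M+1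
    · have hmom : ∀ j : Fin 2, ∀ n ∈ Finset.Icc (-((2*M+1:ℕ):ℤ)) ((2*M+1:ℕ):ℤ),
          cmom ω ν M V P f x j n = 0 := by
        intro j
        apply trig_coeffs_zero hωne (2*M+1) (fun n => cmom ω ν M V P f x j n)
        intro t
        rw [← mom_master hΩ ω ν M V P f hVreg hPreg hzero v p hv hp hx t j]
        exact sub_eq_zero_of_eq ((hTD t x hx).1 j)
      have hcon : ∀ n ∈ Finset.Icc (-((2*M+1:ℕ):ℤ)) ((2*M+1:ℕ):ℤ),
          ccon ω c M V P x n = 0 := by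
        apply trig_coeffs_zero hωne (2*M+1) (fun n => ccon ω c M V P x n)
        intro t
        rw [← con_master hΩ ω c M V P hVreg hPreg hzero v p hv hp hx t]
        exact (hTD t x hx).2
      constructor
      · intro j
        rcases Nat.eq_zero_or_pos k with rfl | hk1
        · have h0 := hmom j 0 (by simp only [Finset.mem_Icc]; omega)
          rw [cmom_zero_eq hΩ ω ν M V P f hzV hV0real hx j] at h0
          rw [if_neg (by omega)]
          exact h0
        · have h0 := hmom j (k:ℤ) (by simp only [Finset.mem_Icc]; omega)
          rw [cmom_pos_eq hΩ ω ν M V P f hzV hV0real hx k hk1 hk j] at h0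
          rcases mul_eq_zero.mp h0 with h | h
          · norm_num at h
          · exact sub_eq_zero.mp h
      · rcases Nat.eq_zero_or_pos k with rfl | hk1
        · have h0 := hcon 0 (by simp only [Finset.mem_Icc]; omega)
          rw [ccon_zero_eq hΩ ω c M V P hVreg hPreg hzV hzP hV0real hP0real hx] at h0
          exact h0
        · have h0 := hcon (k:ℤ) (by simp only [Finset.mem_Icc]; omega)
          rw [ccon_pos_eq hΩ ω c M V P hVreg hPreg hzV hzP hV0real hP0real hx k hk1 hk] at h0
          rcases mul_eq_zero.mp h0 with h | h
          · norm_num at h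
          · exact h
    · have hk' : 2*M < k := by omega
      refine ⟨fun j => ?_, FD_con_trivial ω c M V P hzV hzP k hk' x⟩
      rw [if_neg (by omega)]
      exact FD_mom_trivial ω ν M V P hzV hzP k hk' x j
  · intro hFD t x hx
    have hmompos : ∀ j : Fin 2, ∀ m : ℕ, m ≤ 2*M+1 → cmom ω ν M V P f x j (m:ℤ) = 0 := by
      intro j m hm
      have hFDm := (hFD m x hx).1 j
      rcases Nat.eq_zero_or_pos m with rfl | hm1
      · rw [if_neg (by omega)] at hFDm
        rw [show ((0:ℕ):ℤ) = (0:ℤ) from rfl,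
          cmom_zero_eq hΩ ω ν M V P f hzV hV0real hx j]
        exact hFDm
      · rw [cmom_pos_eq hΩ ω ν M V P f hzV hV0real hx m hm1 hm j,
          sub_eq_zero.mpr hFDm, mul_zero]
    have hconpos : ∀ m : ℕ, m ≤ 2*M+1 → ccon ω c M V P x (m:ℤ) = 0 := by
      intro m hm
      have hFDm := (hFD m x hx).2
      rcases Nat.eq_zero_or_pos m with rfl | hm1
      · rw [show ((0:ℕ):ℤ) = (0:ℤ) from rfl,
          ccon_zero_eq hΩ ω c M V P hVreg hPreg hzV hzP hV0real hP0real hx]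
        exact hFDm
      · rw [ccon_pos_eq hΩ ω c M V P hVreg hPreg hzV hzP hV0real hP0real hx m hm1 hm,
          hFDm, mul_zero]
    have hmomc : ∀ j : Fin 2, ∀ n ∈ Finset.Icc (-((2*M+1:ℕ):ℤ)) ((2*M+1:ℕ):ℤ),
        cmom ω ν M V P f x j n = 0 := by
      intro j n hn
      simp only [Finset.mem_Icc] at hn
      rcases le_or_gt 0 n with hn0 | hn0
      · obtain ⟨m, rfl⟩ : ∃ m : ℕ, n = (m:ℤ) := ⟨n.toNat, (Int.toNat_of_nonneg hn0).symm⟩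
        exact hmompos j m (by omega)
      · obtain ⟨m, rfl⟩ : ∃ m : ℕ, n = -(m:ℤ) := ⟨(-n).toNat, by omega⟩
        rw [cmom_neg_eq hΩ ω ν M V P f hV0real hP0real hx j m,
          hmompos j m (by omega), star_zero]
    have hconc : ∀ n ∈ Finset.Icc (-((2*M+1:ℕ):ℤ)) ((2*M+1:ℕ):ℤ),
        ccon ω c M V P x n = 0 := by
      intro n hn
      simp only [Finset.mem_Icc] at hn
      rcases le_or_gt 0 n with hn0 | hn0
      · obtain ⟨m, rfl⟩ : ∃ m : ℕ, n = (m:ℤ) := ⟨n.toNat, (Int.toNat_of_nonneg hn0).symm⟩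
        exact hconpos m (by omega)
      · obtain ⟨m, rfl⟩ : ∃ m : ℕ, n = -(m:ℤ) := ⟨(-n).toNat, by omega⟩
        rw [ccon_neg_eq hΩ ω c M V P hV0real hP0real hx m, hconpos m (by omega), star_zero]
    constructor
    · intro j
      have hmm := mom_master hΩ ω ν M V P f hVreg hPreg hzero v p hv hp hx t j
      rw [Finset.sum_eq_zero (fun n hn => by rw [hmomc j n hn, zero_mul])] at hmm
      exact sub_eq_zero.mp hmm
    · have hcc := con_master hΩ ω c M V P hVreg hPreg hzero v p hv hp hx t
      rw [Finset.sum_eq_zero (fun n hn => by rw [hconc n hn, zero_mul])] at hcc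
      exact hcc

end
end

section
/- Let ω, ν > 0, λ₀ = (1−i)√(ω/(2ν)), and let a, a', b, κ ∈ ℂ (a' standing for the tangential derivative of the trace a, κ for the curvature). Define u⁰(S) = −a e^{−λ₀S}, u¹(S) = −(b + (1/2)κS a) e^{−λ₀S}, and u_s¹(S) = −(a'/λ₀) e^{−λ₀S}. Then for all S ≥ 0: (i) iω u¹(S) + ν (u¹)''(S) = κ(3iωS u⁰(S) + 3νS (u⁰)''(S) + ν (u⁰)'(S)); (ii) (u_s¹)'(S) = a' e^{−λ₀S} (i.e. ∂_S u_s¹ = −∂_τ u⁰ when ∂_τ a = a'); (iii) u¹(0) = −b, u_s¹(0) = −a'/λ₀, and u¹(S), u_s¹(S) → 0 as S → ∞. -/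
open Filter Topology

noncomputable section

/-! All three profiles have the form `(c + d S) e^{-λ₀ S}`. This class is closed under `d/dS`,
so (i) and (ii) reduce to identities between the coefficients, in which `λ₀` enters only
through `ν λ₀² = -iω`; the limits hold because `Re λ₀ = √(ω/(2ν)) > 0`. -/

section AffineMulExp

variable (lam c d : ℂ)

theorem hasDerivAt_affine_mul_cexp_neg (S : ℝ) :
    HasDerivAt (fun S : ℝ => (c + d * S) * Complex.exp (-(lam * S)))
      (((d - lam * c) + -(lam * d) * S) * Complex.exp (-(lam * S))) S := by
  have hid : HasDerivAt (fun S : ℝ => (S : ℂ)) 1 S := Complex.ofRealCLM.hasDerivAt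
  have hexp : HasDerivAt (fun S : ℝ => Complex.exp (-(lam * S)))
      (Complex.exp (-(lam * S)) * -(lam * 1)) S := ((hid.const_mul lam).neg).cexp
  refine (((hid.const_mul d).const_add c).mul hexp).congr_deriv ?_
  ring

theorem deriv_affine_mul_cexp_neg :
    deriv (fun S : ℝ => (c + d * S) * Complex.exp (-(lam * S)))
      = fun S : ℝ => ((d - lam * c) + -(lam * d) * S) * Complex.exp (-(lam * S)) :=
  funext fun S => (hasDerivAt_affine_mul_cexp_neg lam c d S).deriv

variable {lam}

theorem tendsto_ofReal_pow_mul_cexp_neg_atTop (hlam : 0 < lam.re) (n : ℕ) :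
    Tendsto (fun S : ℝ => (S : ℂ) ^ n * Complex.exp (-(lam * S))) atTop (𝓝 0) := by
  rw [tendsto_zero_iff_norm_tendsto_zero]
  refine (tendsto_rpow_mul_exp_neg_mul_atTop_nhds_zero n lam.re hlam).congr' ?_
  filter_upwards [eventually_ge_atTop 0] with S hS
  simp [Complex.norm_exp, Real.rpow_natCast, abs_of_nonneg hS]

theorem tendsto_affine_mul_cexp_neg_atTop (hlam : 0 < lam.re) :
    Tendsto (fun S : ℝ => (c + d * S) * Complex.exp (-(lam * S))) atTop (𝓝 0) := by
  have hlim := ((tendsto_ofReal_pow_mul_cexp_neg_atTop hlam 0).const_mul c).add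
    ((tendsto_ofReal_pow_mul_cexp_neg_atTop hlam 1).const_mul d)
  simp only [mul_zero, add_zero] at hlim
  exact hlim.congr fun S => by ring

end AffineMulExp

theorem re_one_sub_I_mul_ofReal (r : ℝ) : ((1 - Complex.I) * r).re = r := by
  simp

theorem one_sub_I_mul_ofReal_sq (r : ℝ) :
    ((1 - Complex.I) * r) ^ 2 = -(2 * Complex.I * r ^ 2) := by
  linear_combination (r : ℂ) ^ 2 * Complex.I_sq

theorem ne_zero_of_one_sub_I_mul_ofReal {r : ℝ} (hr : r ≠ 0) : (1 - Complex.I) * r ≠ 0 := by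
  intro h
  simpa [hr] using congrArg Complex.re h

/-- the first-order near-field profiles. With `λ₀ = (1−i)√(ω/(2ν))`,
`u⁰(S) = −a e^{−λ₀S}`, `u¹(S) = −(b + (1/2)κS a)e^{−λ₀S}`, `u_s¹(S) = −(a'/λ₀)e^{−λ₀S}`,
one has for all `S ≥ 0`:
(i) `iω u¹ + ν (u¹)'' = κ(3iωS u⁰ + 3νS (u⁰)'' + ν (u⁰)')`;
(ii) `(u_s¹)'(S) = a' e^{−λ₀S}`;
(iii) `u¹(0) = −b`, `u_s¹(0) = −a'/λ₀`, and `u¹, u_s¹ → 0` as `S → ∞`. -/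
theorem stmt_7 (ω ν : ℝ) (hω : 0 < ω) (hν : 0 < ν)
    (lam0 : ℂ) (hlam : lam0 = (1 - Complex.I) * (Real.sqrt (ω / (2 * ν)) : ℂ))
    (a a' b κ : ℂ) :
    let u0 : ℝ → ℂ := fun S => -a * Complex.exp (-(lam0 * S))
    let u1 : ℝ → ℂ := fun S => -(b + (1 / 2) * κ * S * a) * Complex.exp (-(lam0 * S))
    let us1 : ℝ → ℂ := fun S => -(a' / lam0) * Complex.exp (-(lam0 * S))
    (∀ S : ℝ, 0 ≤ S →
      Complex.I * ω * u1 S + ν * deriv (deriv u1) S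
        = κ * (3 * Complex.I * ω * S * u0 S + 3 * ν * S * deriv (deriv u0) S
            + ν * deriv u0 S))
    ∧ (∀ S : ℝ, 0 ≤ S → deriv us1 S = a' * Complex.exp (-(lam0 * S)))
    ∧ u1 0 = -b
    ∧ us1 0 = -a' / lam0
    ∧ Tendsto u1 atTop (nhds 0)
    ∧ Tendsto us1 atTop (nhds 0) := by
  intro u0 u1 us1
  set r := Real.sqrt (ω / (2 * ν))
  have hr : 0 < r := Real.sqrt_pos.mpr (by positivity)
  have hre : 0 < lam0.re := by rwa [hlam, re_one_sub_I_mul_ofReal]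
  have hlam0 : lam0 ≠ 0 := hlam ▸ ne_zero_of_one_sub_I_mul_ofReal hr.ne'
  have hsq : (ν : ℂ) * lam0 ^ 2 = -(Complex.I * ω) := by
    have hr2 : (r : ℂ) ^ 2 = ω / (2 * ν) := by
      exact_mod_cast Real.sq_sqrt (by positivity : 0 ≤ ω / (2 * ν))
    rw [hlam, one_sub_I_mul_ofReal_sq, hr2]
    field_simp [Complex.ofReal_ne_zero.mpr hν.ne']
  have hu0 : u0 = fun S : ℝ => (-a + 0 * S) * Complex.exp (-(lam0 * S)) := by
    funext S; simp [u0]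
  have hu1 : u1 = fun S : ℝ => (-b + -(1 / 2 * κ * a) * S) * Complex.exp (-(lam0 * S)) := by
    funext S; simp only [u1]; ring
  have hus1 : us1 = fun S : ℝ => (-(a' / lam0) + 0 * S) * Complex.exp (-(lam0 * S)) := by
    funext S; simp [us1]
  refine ⟨fun S _ => ?_, fun S _ => ?_, by simp [u1], by simp [us1, neg_div], ?_, ?_⟩
  · simp only [hu0, hu1, deriv_affine_mul_cexp_neg]
    linear_combination ((-b - 1 / 2 * κ * a * S + 3 * κ * S * a) *
      Complex.exp (-(lam0 * S))) * hsq
  · simp only [hus1, deriv_affine_mul_cexp_neg]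
    field_simp
    ring
  · exact hu1 ▸ tendsto_affine_mul_cexp_neg_atTop _ _ hre
  · exact hus1 ▸ tendsto_affine_mul_cexp_neg_atTop _ _ hre

end
end

section
/- Let ω, ν > 0, λ₀ = (1−i)√(ω/(2ν)), and let a, a', a'', b, b', d, κ, κ' ∈ ℂ. Define u⁰(S) = −a e^{−λ₀S}, u¹(S) = −(b + (1/2)κS a)e^{−λ₀S}, u_s¹(S) = −(a'/λ₀)e^{−λ₀S}, and the second-order profiles u²(S) = −(d + (1/2)κS b − (3κ²S/8)(1/λ₀ − S) a + (S/(2λ₀)) a'') e^{−λ₀S} and u_s²(S) = −(1/λ₀)(b' + (κ/2)(3S + 1/λ₀) a' + (κ'/2)(S + 1/λ₀) a) e^{−λ₀S}. Then for all S ≥ 0: (i) iω u²(S) + ν (u²)''(S) = κ(3iωS u¹(S) + 3νS (u¹)''(S) + ν (u¹)'(S)) + ν a'' e^{−λ₀S} − κ²(3iωS² u⁰(S) + 3νS² (u⁰)''(S) + ν(2S (u⁰)'(S) − u⁰(S))); (ii) (u_s²)'(S) = (b' + (1/2)κ'S a + (1/2)κS a') e^{−λ₀S} + κ(S (u_s¹)'(S)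 + u_s¹(S)); (iii) u²(0) = −d and u²(S), u_s²(S) → 0 as S → ∞. -/
/-!
Every profile is of the form `p(S) e^{-λ₀S}` with `p` a polynomial whose coefficients are
rational in `λ₀`, and differentiation acts on it through `p ↦ p' - λ₀ p`. Using
`iω = -νλ₀²` to eliminate `ω`, the identities (i) and (ii) become identities between such
polynomials, while the decay at infinity holds because `Re λ₀ > 0`.
-/

open Filter Topology Polynomial

noncomputable def polyExp (lam : ℂ) (p : ℂ[X]) (S : ℝ) : ℂ := p.eval (S : ℂ) * Complex.exp (-(lam * S))

theorem hasDerivAt_polyExp (lam : ℂ) (p : ℂ[X]) (S : ℝ) :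
    HasDerivAt (polyExp lam p) (polyExp lam (derivative p - C lam * p) S) S := by
  have h := ((p.hasDerivAt (S : ℂ)).fun_mul
    (((hasDerivAt_id' (S : ℂ)).const_mul lam).fun_neg.cexp)).comp_ofReal
  exact h.congr_deriv (by simp only [polyExp, eval_sub, eval_mul, eval_C]; ring)

theorem deriv_polyExp (lam : ℂ) (p : ℂ[X]) :
    deriv (polyExp lam p) = polyExp lam (derivative p - C lam * p) :=
  funext fun S => (hasDerivAt_polyExp lam p S).deriv

theorem tendsto_ofReal_pow_mul_exp_neg_atTop {lam : ℂ} (hlam : 0 < lam.re) (n : ℕ) :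
    Tendsto (fun S : ℝ => (S : ℂ) ^ n * Complex.exp (-(lam * S))) atTop (𝓝 0) := by
  rw [tendsto_zero_iff_norm_tendsto_zero]
  refine (isLittleO_pow_exp_pos_mul_atTop n hlam).tendsto_div_nhds_zero.congr' ?_
  filter_upwards [eventually_ge_atTop 0] with S hS
  simp [Complex.norm_exp, abs_of_nonneg hS, Real.exp_neg, div_eq_mul_inv]

theorem tendsto_polyExp_atTop {lam : ℂ} (hlam : 0 < lam.re) (p : ℂ[X]) :
    Tendsto (polyExp lam p) atTop (𝓝 0) := by
  induction p using Polynomial.induction_on' with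
  | monomial n c =>
    simpa using ((tendsto_ofReal_pow_mul_exp_neg_atTop hlam n).const_mul c).congr
      fun S => by simp [polyExp, mul_assoc]
  | add p q hp hq => simpa using (hp.add hq).congr fun S => by simp [polyExp, add_mul]

theorem one_sub_I_mul_sqrt_sq {x : ℝ} (hx : 0 ≤ x) :
    ((1 - Complex.I) * (Real.sqrt x : ℂ)) ^ 2 = -(2 * Complex.I * x) := by
  rw [mul_pow, ← Complex.ofReal_pow, Real.sq_sqrt hx, sub_sq, Complex.I_sq]
  ring

theorem re_one_sub_I_mul_sqrt_pos {x : ℝ} (hx : 0 < x) :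
    0 < ((1 - Complex.I) * (Real.sqrt x : ℂ)).re := by
  simpa [Complex.mul_re] using Real.sqrt_pos.mpr hx

/-- the second-order near-field profiles. With `λ₀ = (1−i)√(ω/(2ν))`,
`u⁰(S) = −a e^{−λ₀S}`, `u¹(S) = −(b + (1/2)κS a)e^{−λ₀S}`, `u_s¹(S) = −(a'/λ₀)e^{−λ₀S}`,
`u²(S) = −(d + (1/2)κS b − (3κ²S/8)(1/λ₀ − S) a + (S/(2λ₀)) a'')e^{−λ₀S}` and
`u_s²(S) = −(1/λ₀)(b' + (κ/2)(3S + 1/λ₀) a' + (κ'/2)(S + 1/λ₀) a)e^{−λ₀S}`,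
one has for all `S ≥ 0`:
(i) `iω u² + ν (u²)'' = κ(3iωS u¹ + 3νS (u¹)'' + ν(u¹)') + ν a'' e^{−λ₀S}
     − κ²(3iωS² u⁰ + 3νS² (u⁰)'' + ν(2S(u⁰)' − u⁰))`;
(ii) `(u_s²)' = (b' + (1/2)κ'S a + (1/2)κS a')e^{−λ₀S} + κ(S(u_s¹)' + u_s¹)`;
(iii) `u²(0) = −d` and `u², u_s² → 0` as `S → ∞`. -/
theorem stmt_8 (ω ν : ℝ) (hω : 0 < ω) (hν : 0 < ν)
    (lam0 : ℂ) (hlam : lam0 = (1 - Complex.I) * (Real.sqrt (ω / (2 * ν)) : ℂ))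
    (a a' a'' b b' d κ κ' : ℂ) :
    let u0 : ℝ → ℂ := fun S => -a * Complex.exp (-(lam0 * S))
    let u1 : ℝ → ℂ := fun S => -(b + (1 / 2) * κ * S * a) * Complex.exp (-(lam0 * S))
    let us1 : ℝ → ℂ := fun S => -(a' / lam0) * Complex.exp (-(lam0 * S))
    let u2 : ℝ → ℂ := fun S =>
      -(d + (1 / 2) * κ * S * b - (3 * κ ^ 2 * S / 8) * (1 / lam0 - S) * a
          + (S / (2 * lam0)) * a'') * Complex.exp (-(lam0 * S))
    let us2 : ℝ → ℂ := fun S =>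
      -(1 / lam0) * (b' + (κ / 2) * (3 * S + 1 / lam0) * a'
          + (κ' / 2) * (S + 1 / lam0) * a) * Complex.exp (-(lam0 * S))
    (∀ S : ℝ, 0 ≤ S →
      Complex.I * ω * u2 S + ν * deriv (deriv u2) S
        = κ * (3 * Complex.I * ω * S * u1 S + 3 * ν * S * deriv (deriv u1) S
              + ν * deriv u1 S)
          + ν * a'' * Complex.exp (-(lam0 * S))
          - κ ^ 2 * (3 * Complex.I * ω * S ^ 2 * u0 S
              + 3 * ν * S ^ 2 * deriv (deriv u0) S
              + ν * (2 * S * deriv u0 S - u0 S)))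
    ∧ (∀ S : ℝ, 0 ≤ S →
      deriv us2 S
        = (b' + (1 / 2) * κ' * S * a + (1 / 2) * κ * S * a') * Complex.exp (-(lam0 * S))
          + κ * (S * deriv us1 S + us1 S))
    ∧ u2 0 = -d
    ∧ Tendsto u2 atTop (nhds 0)
    ∧ Tendsto us2 atTop (nhds 0) := by
  intro u0 u1 us1 u2 us2
  have hre : 0 < lam0.re := hlam ▸ re_one_sub_I_mul_sqrt_pos (by positivity)
  have hlam0 : lam0 ≠ 0 := fun h => by simp [h] at hre
  have hk : Complex.I * ω = -(ν * lam0 ^ 2) := by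
    have hν' : (ν : ℂ) ≠ 0 := by exact_mod_cast hν.ne'
    rw [hlam, one_sub_I_mul_sqrt_sq (by positivity)]
    push_cast
    field_simp
  have hu0 : u0 = polyExp lam0 (C (-a)) := by
    funext S; simp only [u0, polyExp, eval_C]
  have hu1 : u1 = polyExp lam0 (C (-b) + C (-(κ * a / 2)) * X) := by
    funext S; simp only [u1, polyExp, eval_add, eval_mul, eval_C, eval_X]; ring
  have hus1 : us1 = polyExp lam0 (C (-(a' / lam0))) := by
    funext S; simp only [us1, polyExp, eval_C]
  have hu2 : u2 = polyExp lam0 (C (-d)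
      + C (-(κ * b / 2) + 3 * κ ^ 2 * a / (8 * lam0) - a'' / (2 * lam0)) * X
      + C (-(3 * κ ^ 2 * a / 8)) * X ^ 2) := by
    funext S; simp only [u2, polyExp, eval_add, eval_mul, eval_C, eval_X, eval_pow]; ring
  have hus2 : us2 = polyExp lam0
      (C (-(b' + κ * a' / (2 * lam0) + κ' * a / (2 * lam0)) / lam0)
        + C (-(3 * κ * a' / 2 + κ' * a / 2) / lam0) * X) := by
    funext S; simp only [us2, polyExp, eval_add, eval_mul, eval_C, eval_X]; ring
  refine ⟨fun S _ => ?_, fun S _ => ?_, by simp [u2], ?_, ?_⟩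
  · -- the coefficient of `iω` in the difference of the two sides
    linear_combination (norm := skip) (u2 S - 3 * κ * S * u1 S + 3 * κ ^ 2 * S ^ 2 * u0 S) * hk
    rw [hu0, hu1, hu2]
    simp only [deriv_polyExp, polyExp, derivative_add, derivative_sub, derivative_mul,
      derivative_C, derivative_X, derivative_X_pow, derivative_zero, derivative_one, eval_add,
      eval_sub, eval_mul, eval_C, eval_X, eval_pow, eval_zero, eval_one]
    field_simp
    ring
  · rw [hus1, hus2, deriv_polyExp, deriv_polyExp]
    simp only [polyExp, derivative_add, derivative_mul, derivative_C, derivative_X, eval_add,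
      eval_sub, eval_mul, eval_C, eval_X, eval_zero, eval_one]
    field_simp
    ring
  · rw [hu2]; exact tendsto_polyExp_atTop hre _
  · rw [hus2]; exact tendsto_polyExp_atTop hre _
end
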